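/- arXiv:2103.02801 — 6 statements merged into one kernel-verified Lean document; each statement's English description precedes it below -/
import Mathlib

section
/- If f: X → Y is a Q-order-preserving map and φ is a flat ideal of X, then f^→(φ) is a flat ideal of Y, where f^→(φ)(y) = ⋁_{x∈X} φ(x) & Y(y,f(x)). -/
/-- If `f : X → Y` preserves `Q`-order and `φ` is a flat ideal of `X`, then
`f^→(φ)` is a flat ideal of `Y`. -/
theorem image_of_flat_ideal_is_flat
    (Q : Type*) [CompleteLattice Q]
    (op : Q → Q → Q) (imp : Q → Q → Q) (k : Q)
    (comm : ∀ a b, op a b = op b a)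
    (assoc : ∀ a b c, op (op a b) c = op a (op b c))
    (unit : ∀ a, op k a = a)
    (adj : ∀ p q r, op p q ≤ r ↔ q ≤ imp p r)
    (X Y : Type*) (ordX : X → X → Q) (ordY : Y → Y → Q)
    (reflX : ∀ x, k ≤ ordX x x)
    (transX : ∀ x y z, op (ordX y z) (ordX x y) ≤ ordX x z)
    (reflY : ∀ x, k ≤ ordY x x)
    (transY : ∀ x y z, op (ordY y z) (ordY x y) ≤ ordY x z)
    (f : X → Y) (hf : ∀ x y, ordX x y ≤ ordY (f x) (f y))
    (φ : X → Q)
    (weight : ∀ x y, op (φ y) (ordX x y) ≤ φ x)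
    (inhabited : k ≤ ⨆ x, φ x)
    (flat : ∀ ψ₁ ψ₂ : X → Q,
      (∀ x y, op (ordX x y) (ψ₁ x) ≤ ψ₁ y) →
      (∀ x y, op (ordX x y) (ψ₂ x) ≤ ψ₂ y) →
      (⨆ x, op (φ x) (ψ₁ x ⊓ ψ₂ x)) =
        (⨆ x, op (φ x) (ψ₁ x)) ⊓ (⨆ x, op (φ x) (ψ₂ x))) :
    -- f^→(φ)(y) = ⨆ x, φ x & Y(y, f x) is a flat ideal of Y
    (∀ y y', op (⨆ x, op (φ x) (ordY y' (f x))) (ordY y y')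
        ≤ ⨆ x, op (φ x) (ordY y (f x))) ∧
    (k ≤ ⨆ y, ⨆ x, op (φ x) (ordY y (f x))) ∧
    (∀ ψ₁ ψ₂ : Y → Q,
      (∀ x y, op (ordY x y) (ψ₁ x) ≤ ψ₁ y) →
      (∀ x y, op (ordY x y) (ψ₂ x) ≤ ψ₂ y) →
      (⨆ y, op (⨆ x, op (φ x) (ordY y (f x))) (ψ₁ y ⊓ ψ₂ y)) =
        (⨆ y, op (⨆ x, op (φ x) (ordY y (f x))) (ψ₁ y)) ⊓
        (⨆ y, op (⨆ x, op (φ x) (ordY y (f x))) (ψ₂ y))) := by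
  -- monotonicity of op in the right argument
  have monoR : ∀ p {q q' : Q}, q ≤ q' → op p q ≤ op p q' := by
    intro p q q' h
    exact (adj p q (op p q')).mpr (le_trans h ((adj p q' (op p q')).mp le_rfl))
  have monoL : ∀ {p p' : Q} (q : Q), p ≤ p' → op p q ≤ op p' q := by
    intro p p' q h
    rw [comm p q, comm p' q]; exact monoR q h
  -- op distributes over iSup in the left argument
  have distL : ∀ (g : X → Q) (c : Q),
      op (⨆ i, g i) c = ⨆ i, op (g i) c := by
    intro g c
    apply le_antisymm
    · rw [comm]
      rw [adj]
      exact iSup_le fun i => (adj c (g i) _).mp (by rw [comm]; exact le_iSup (fun i => op (g i) c) i)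
    · exact iSup_le fun i => monoL c (le_iSup g i)
  have unitR : ∀ a, op a k = a := fun a => by rw [comm]; exact unit a
  refine ⟨?_, ?_, ?_⟩
  · -- weight condition
    intro y y'
    rw [distL (fun x => op (φ x) (ordY y' (f x))) (ordY y y')]
    refine iSup_le fun x => ?_
    rw [assoc]
    calc op (φ x) (op (ordY y' (f x)) (ordY y y'))
        ≤ op (φ x) (ordY y (f x)) := monoR _ (transY y y' (f x))
      _ ≤ _ := le_iSup (fun x => op (φ x) (ordY y (f x))) x
  · -- inhabitedness
    refine le_trans inhabited (iSup_le fun x => ?_)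
    have : φ x ≤ op (φ x) (ordY (f x) (f x)) := by
      calc φ x = op (φ x) k := (unitR _).symm
        _ ≤ op (φ x) (ordY (f x) (f x)) := monoR _ (reflY (f x))
    exact le_trans this (le_trans (le_iSup (fun x' => op (φ x') (ordY (f x) (f x'))) x)
      (le_iSup (fun y => ⨆ x, op (φ x) (ordY y (f x))) (f x)))
  · -- flatness
    intro ψ₁ ψ₂ h₁ h₂
    -- key: for any coweight ψ on Y,
    --   ⨆ y, op (Φ y) (ψ y) = ⨆ x, op (φ x) (ψ (f x))
    have key : ∀ ψ : Y → Q, (∀ x y, op (ordY x y) (ψ x) ≤ ψ y) →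
        (⨆ y, op (⨆ x, op (φ x) (ordY y (f x))) (ψ y)) = ⨆ x, op (φ x) (ψ (f x)) := by
      intro ψ hψ
      apply le_antisymm
      · refine iSup_le fun y => ?_
        rw [distL (fun x => op (φ x) (ordY y (f x))) (ψ y)]
        refine iSup_le fun x => ?_
        rw [assoc]
        calc op (φ x) (op (ordY y (f x)) (ψ y))
            ≤ op (φ x) (ψ (f x)) := monoR _ (hψ y (f x))
          _ ≤ _ := le_iSup (fun x => op (φ x) (ψ (f x))) x
      · refine iSup_le fun x => ?_
        have h1 : op (φ x) (ψ (f x)) = op (op (φ x) (ordY (f x) (f x))) (ψ (f x)) ⊔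
            op (φ x) (ψ (f x)) := by
          refine (sup_eq_right.mpr ?_).symm
          rw [assoc]
          calc op (φ x) (op (ordY (f x) (f x)) (ψ (f x)))
              ≤ op (φ x) (ψ (f x)) := monoR _ (hψ (f x) (f x))
            _ ≤ _ := le_rfl
        have h2 : op (φ x) (ψ (f x)) ≤ op (op (φ x) (ordY (f x) (f x))) (ψ (f x)) := by
          rw [assoc]
          refine monoR _ ?_
          calc ψ (f x) = op k (ψ (f x)) := (unit _).symm
            _ ≤ op (ordY (f x) (f x)) (ψ (f x)) := monoL _ (reflY (f x))
        refine le_trans h2 (le_trans ?_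
          (le_iSup (fun y => op (⨆ x, op (φ x) (ordY y (f x))) (ψ y)) (f x)))
        exact monoL _ (le_iSup (fun x' => op (φ x') (ordY (f x) (f x'))) x)
    have cow : ∀ ψ : Y → Q, (∀ x y, op (ordY x y) (ψ x) ≤ ψ y) →
        (∀ x y, op (ordX x y) (ψ (f x)) ≤ ψ (f y)) := by
      intro ψ hψ x y
      exact le_trans (monoL _ (hf x y)) (hψ (f x) (f y))
    rw [key ψ₁ h₁, key ψ₂ h₂, key (fun y => ψ₁ y ⊓ ψ₂ y)
      (fun x y => le_inf (le_trans (monoR _ inf_le_left) (h₁ x y))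
        (le_trans (monoR _ inf_le_right) (h₂ x y)))]
    exact flat (fun x => ψ₁ (f x)) (fun x => ψ₂ (f x)) (cow ψ₁ h₁) (cow ψ₂ h₂)
end

section
/- Let Q be a commutative integral quantale and X an F-domain. Then for every Q-order-preserving map ψ: X → (Q,α_L), the interior of ψ in the Scott Q-topology of X equals ⋁_{a∈X} w(a,-) & ψ(a). In particular, ψ is Scott open if and only if ψ(x) = ⋁_{a} w(a,x) & ψ(a) for all x. -/
/-- In an `F`-domain `X` over a commutative integral quantale, the Scott
interior of any `Q`-order-preserving `ψ : X → (Q, α_L)` (a coweight) is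
`⨆ a, w(a,-) & ψ(a)`; in particular `ψ` is Scott open iff
`ψ x = ⨆ a, w(a,x) & ψ(a)` for all `x`. -/
theorem scott_interior_in_F_domain
    (Q : Type*) [CompleteLattice Q]
    (op : Q → Q → Q) (imp : Q → Q → Q)
    (comm : ∀ a b, op a b = op b a)
    (assoc : ∀ a b c, op (op a b) c = op a (op b c))
    (unit : ∀ a : Q, op ⊤ a = a)  -- integral: the unit is the top element
    (adj : ∀ p q r : Q, op p q ≤ r ↔ q ≤ imp p r)
    (X : Type*) (ord : X → X → Q)
    (refl : ∀ x, (⊤ : Q) ≤ ord x x)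
    (trans : ∀ x y z, op (ord y z) (ord x y) ≤ ord x z)
    (separated : ∀ x y, (⊤ : Q) ≤ ord x y ⊓ ord y x → x = y)
    -- the set of flat ideals of X
    (Flat : Set (X → Q))
    (hFlat : ∀ φ, φ ∈ Flat ↔
      ((∀ x y, op (φ y) (ord x y) ≤ φ x) ∧ ((⊤ : Q) ≤ ⨆ x, φ x) ∧
       (∀ ψ₁ ψ₂ : X → Q,
         (∀ x y, op (ord x y) (ψ₁ x) ≤ ψ₁ y) →
         (∀ x y, op (ord x y) (ψ₂ x) ≤ ψ₂ y) →
         (⨆ x, op (φ x) (ψ₁ x ⊓ ψ₂ x)) =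
           (⨆ x, op (φ x) (ψ₁ x)) ⊓ (⨆ x, op (φ x) (ψ₂ x)))))
    -- X is F-cocomplete
    (ssup : (X → Q) → X)
    (hssup : ∀ φ ∈ Flat, ∀ y, ord (ssup φ) y = ⨅ x, imp (φ x) (ord x y))
    -- the way-below Q-relation
    (w : X → X → Q)
    (hw : ∀ x y, w x y = ⨅ φ ∈ Flat, imp (ord y (ssup φ)) (φ x))
    -- X is an F-domain: x ↦ w(-,x) is left adjoint to sup : FX → X
    (hwflat : ∀ x, (fun a => w a x) ∈ Flat ∧ ssup (fun a => w a x) = x)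
    (hadj : ∀ x, ∀ φ ∈ Flat, (⨅ a, imp (w a x) (φ a)) = ord x (ssup φ))
    -- ψ : a Q-order-preserving map X → (Q, α_L), i.e. a coweight of X
    (ψ : X → Q) (coweight : ∀ x y, op (ord x y) (ψ x) ≤ ψ y) :
    (∀ y, (⨆ μ ∈ {μ : X → Q |
            (∀ x y, op (ord x y) (μ x) ≤ μ y) ∧
            (∀ φ ∈ Flat, μ (ssup φ) ≤ ⨆ x, op (φ x) (μ x)) ∧
            μ ≤ ψ}, μ y)
        = ⨆ a, op (w a y) (ψ a)) ∧
    ((∀ φ ∈ Flat, ψ (ssup φ) ≤ ⨆ x, op (φ x) (ψ x)) ↔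
      ∀ x, ψ x = ⨆ a, op (w a x) (ψ a)) := by
  -- basic quantale facts
  have op_mono_r : ∀ (p : Q) {q q' : Q}, q ≤ q' → op p q ≤ op p q' := by
    intro p q q' h
    exact (adj p q (op p q')).mpr (h.trans ((adj p q' (op p q')).mp le_rfl))
  have op_mono_l : ∀ {p p' : Q} (q : Q), p ≤ p' → op p q ≤ op p' q := by
    intro p p' q h
    rw [comm p q, comm p' q]; exact op_mono_r q h
  have op_mono : ∀ {p p' q q' : Q}, p ≤ p' → q ≤ q' → op p q ≤ op p' q' := by
    intro p p' q q' h1 h2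
    exact (op_mono_l q h1).trans (op_mono_r p' h2)
  have counit : ∀ p r : Q, op p (imp p r) ≤ r := fun p r => (adj p _ r).mpr le_rfl
  have op_top : ∀ p : Q, op p ⊤ = p := fun p => by rw [comm]; exact unit p
  have top_imp : ∀ p r : Q, (⊤:Q) ≤ imp p r ↔ p ≤ r := by
    intro p r
    rw [← adj, op_top]
  have imp_mono_l : ∀ {p p' : Q} (r : Q), p ≤ p' → imp p' r ≤ imp p r := by
    intro p p' r h
    rw [← adj]
    exact (op_mono_l _ h).trans (counit p' r)
  have imp_mono_r : ∀ (p : Q) {r r' : Q}, r ≤ r' → imp p r ≤ imp p r' := by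
    intro p r r' h
    rw [← adj]
    exact (counit p r).trans h
  have imp_top : ∀ r : Q, imp ⊤ r = r := by
    intro r
    apply le_antisymm
    · have := counit ⊤ r; rwa [unit] at this
    · rw [← adj, unit]
  have op_iSup : ∀ (p : Q) (f : X → Q), op p (⨆ i, f i) = ⨆ i, op p (f i) := by
    intro p f
    apply le_antisymm
    · rw [adj]
      exact iSup_le fun i => (adj p (f i) _).mp (le_iSup (fun i => op p (f i)) i)
    · exact iSup_le fun i => op_mono_r p (le_iSup f i)
  have op_iSup_l : ∀ (f : X → Q) (c : Q), op (⨆ i, f i) c = ⨆ i, op (f i) c := by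
    intro f c
    rw [comm, op_iSup]
    exact iSup_congr fun i => comm c (f i)
  have imp_iInf : ∀ (p : Q) (f : X → Q), imp p (⨅ i, f i) = ⨅ i, imp p (f i) := by
    intro p f
    apply le_antisymm
    · exact le_iInf fun i => imp_mono_r p (iInf_le f i)
    · rw [← adj]
      exact le_iInf fun i => (op_mono_r p (iInf_le _ i)).trans (counit p (f i))
  have imp_iSup : ∀ (f : X → Q) (r : Q), imp (⨆ i, f i) r = ⨅ i, imp (f i) r := by
    intro f r
    apply le_antisymm
    · exact le_iInf fun i => imp_mono_l r (le_iSup f i)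
    · rw [← adj, op_iSup_l]
      exact iSup_le fun i => (op_mono_r (f i) (iInf_le _ i)).trans (counit (f i) r)
  have imp_op : ∀ p q r : Q, imp (op p q) r = imp q (imp p r) := by
    intro p q r
    apply le_antisymm
    · rw [← adj, ← adj, ← assoc]
      exact counit _ r
    · rw [← adj, assoc]
      exact (op_mono_r p (counit q _)).trans (counit p r)
  -- facts about w
  have w_flat : ∀ y, (fun a => w a y) ∈ Flat := fun y => (hwflat y).1
  have w_ssup : ∀ y, ssup (fun a => w a y) = y := fun y => (hwflat y).2
  have w_le_ord : ∀ a y, w a y ≤ ord a y := by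
    intro a y
    have h := hssup _ (w_flat y) y
    rw [w_ssup y] at h
    have h2 : (⊤:Q) ≤ ⨅ x, imp (w x y) (ord x y) := le_of_le_of_eq (refl y) h
    exact (top_imp _ _).mp (h2.trans (iInf_le _ a))
  have w_le_flat : ∀ φ, φ ∈ Flat → ∀ a, w a (ssup φ) ≤ φ a := by
    intro φ hφ a
    have h1 : w a (ssup φ) ≤ imp (ord (ssup φ) (ssup φ)) (φ a) := by
      rw [hw]; exact iInf₂_le φ hφ
    exact h1.trans ((imp_mono_l _ (refl (ssup φ))).trans (imp_top _).le)
  have w_down : ∀ z a b, op (w b z) (ord a b) ≤ w a z := by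
    intro z a b
    rw [hw b z, hw a z]
    refine le_iInf₂ fun φ hφ => ?_
    have h1 : op (⨅ φ' ∈ Flat, imp (ord z (ssup φ')) (φ' b)) (ord a b)
        ≤ op (imp (ord z (ssup φ)) (φ b)) (ord a b) := op_mono_l _ (iInf₂_le φ hφ)
    refine h1.trans ?_
    rw [← adj, ← assoc]
    exact (op_mono_l _ (counit _ _)).trans (((hFlat φ).mp hφ).1 a b)
  have w_up : ∀ x z y, op (ord z y) (w x z) ≤ w x y := by
    intro x z y
    rw [hw x z, hw x y]
    refine le_iInf₂ fun φ hφ => ?_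
    have h1 : op (ord z y) (⨅ φ' ∈ Flat, imp (ord z (ssup φ')) (φ' x))
        ≤ op (ord z y) (imp (ord z (ssup φ)) (φ x)) := op_mono_r _ (iInf₂_le φ hφ)
    refine h1.trans ?_
    rw [← adj, ← assoc]
    exact (op_mono_l _ (trans z y (ssup φ))).trans (counit _ _)
  -- sup-extensions of coweights along w are coweights
  have g_cow : ∀ (χ : X → Q) (z y : X),
      op (ord z y) (⨆ a, op (w a z) (χ a)) ≤ ⨆ a, op (w a y) (χ a) := by
    intro χ z y
    rw [op_iSup]
    refine iSup_le fun a => le_trans ?_ (le_iSup (fun a => op (w a y) (χ a)) a)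
    rw [← assoc]
    exact op_mono_l _ (w_up a z y)
  -- a reshuffling identity
  have reshuffle : ∀ (y : X) (χ : X → Q),
      (⨆ a, op (⨆ z, op (w z y) (w a z)) (χ a))
        = ⨆ z, op (w z y) (⨆ a, op (w a z) (χ a)) := by
    intro y χ
    calc (⨆ a, op (⨆ z, op (w z y) (w a z)) (χ a))
        = ⨆ a, ⨆ z, op (op (w z y) (w a z)) (χ a) := iSup_congr fun a => op_iSup_l _ _
      _ = ⨆ a, ⨆ z, op (w z y) (op (w a z) (χ a)) :=
          iSup_congr fun a => iSup_congr fun z => assoc _ _ _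
      _ = ⨆ z, ⨆ a, op (w z y) (op (w a z) (χ a)) := iSup_comm
      _ = ⨆ z, op (w z y) (⨆ a, op (w a z) (χ a)) :=
          iSup_congr fun z => (op_iSup _ _).symm
  -- the interpolant flat ideal
  have φ₀flat : ∀ y : X, (fun a => ⨆ z, op (w z y) (w a z)) ∈ Flat := by
    intro y
    obtain ⟨wdc, wtop, wfl⟩ := (hFlat _).mp (w_flat y)
    rw [hFlat]
    refine ⟨?_, ?_, ?_⟩
    · intro a b
      rw [op_iSup_l]
      refine iSup_le fun z => le_trans ?_ (le_iSup (fun z => op (w z y) (w a z)) z)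
      rw [assoc]
      exact op_mono_r _ (w_down z a b)
    · refine le_trans wtop (iSup_le fun z => ?_)
      obtain ⟨_, ztop, _⟩ := (hFlat _).mp (w_flat z)
      calc w z y = op (w z y) ⊤ := (op_top _).symm
        _ ≤ op (w z y) (⨆ a, w a z) := op_mono_r _ ztop
        _ = ⨆ a, op (w z y) (w a z) := op_iSup _ _
        _ ≤ ⨆ a, ⨆ z', op (w z' y) (w a z') :=
            iSup_mono fun a => le_iSup (fun z' => op (w z' y) (w a z')) z
    · intro ψ₁ ψ₂ h₁ h₂
      have hz : ∀ z, (⨆ a, op (w a z) (ψ₁ a ⊓ ψ₂ a))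
          = (⨆ a, op (w a z) (ψ₁ a)) ⊓ (⨆ a, op (w a z) (ψ₂ a)) := by
        intro z
        obtain ⟨_, _, zfl⟩ := (hFlat _).mp (w_flat z)
        exact zfl ψ₁ ψ₂ h₁ h₂
      calc (⨆ a, op (⨆ z, op (w z y) (w a z)) (ψ₁ a ⊓ ψ₂ a))
          = ⨆ z, op (w z y) (⨆ a, op (w a z) (ψ₁ a ⊓ ψ₂ a)) :=
            reshuffle y (fun a => ψ₁ a ⊓ ψ₂ a)
        _ = ⨆ z, op (w z y)
              ((⨆ a, op (w a z) (ψ₁ a)) ⊓ (⨆ a, op (w a z) (ψ₂ a))) :=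
            iSup_congr fun z => by rw [hz z]
        _ = (⨆ z, op (w z y) (⨆ a, op (w a z) (ψ₁ a)))
              ⊓ (⨆ z, op (w z y) (⨆ a, op (w a z) (ψ₂ a))) :=
            wfl (fun z => ⨆ a, op (w a z) (ψ₁ a)) (fun z => ⨆ a, op (w a z) (ψ₂ a))
              (fun z y' => g_cow ψ₁ z y') (fun z y' => g_cow ψ₂ z y')
        _ = (⨆ a, op (⨆ z, op (w z y) (w a z)) (ψ₁ a))
              ⊓ (⨆ a, op (⨆ z, op (w z y) (w a z)) (ψ₂ a)) := by
            rw [reshuffle y ψ₁, reshuffle y ψ₂]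
  have ssup_φ₀ : ∀ y u, ord (ssup (fun a => ⨆ z, op (w z y) (w a z))) u = ord y u := by
    intro y u
    rw [hssup _ (φ₀flat y)]
    calc (⨅ a, imp (⨆ z, op (w z y) (w a z)) (ord a u))
        = ⨅ a, ⨅ z, imp (op (w z y) (w a z)) (ord a u) :=
          iInf_congr fun a => imp_iSup _ _
      _ = ⨅ a, ⨅ z, imp (w z y) (imp (w a z) (ord a u)) :=
          iInf_congr fun a => iInf_congr fun z => by
            rw [comm (w z y) (w a z), imp_op]
      _ = ⨅ z, ⨅ a, imp (w z y) (imp (w a z) (ord a u)) := iInf_comm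
      _ = ⨅ z, imp (w z y) (⨅ a, imp (w a z) (ord a u)) :=
          iInf_congr fun z => (imp_iInf _ _).symm
      _ = ⨅ z, imp (w z y) (ord z u) := by
          refine iInf_congr fun z => ?_
          congr 1
          rw [← hssup _ (w_flat z), w_ssup]
      _ = ord y u := by
          conv_rhs => rw [← w_ssup y, hssup _ (w_flat y)]
  have interp : ∀ a y, w a y ≤ ⨆ z, op (w z y) (w a z) := by
    intro a y
    have hsum : (⊤:Q) ≤ ord y (ssup (fun a => ⨆ z, op (w z y) (w a z))) := by
      rw [← ssup_φ₀ y]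
      exact refl _
    have h := hadj y _ (φ₀flat y)
    have h2 : (⊤:Q) ≤ ⨅ b, imp (w b y) (⨆ z, op (w z y) (w b z)) := by
      rw [h]; exact hsum
    exact (top_imp _ _).mp (h2.trans (iInf_le _ a))
  -- properties of θ = ⨆ a, w(a,-) & ψ(a)
  have θ_le : ∀ y, (⨆ a, op (w a y) (ψ a)) ≤ ψ y :=
    fun y => iSup_le fun a => (op_mono_l _ (w_le_ord a y)).trans (coweight a y)
  have θ_scott : ∀ φ, φ ∈ Flat →
      (⨆ a, op (w a (ssup φ)) (ψ a)) ≤ ⨆ x, op (φ x) (⨆ a, op (w a x) (ψ a)) := by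
    intro φ hφ
    refine iSup_le fun a => ?_
    refine le_trans (op_mono_l _ (interp a (ssup φ))) ?_
    rw [op_iSup_l]
    refine iSup_le fun z => ?_
    refine le_trans ?_ (le_iSup (fun x => op (φ x) (⨆ a, op (w a x) (ψ a))) z)
    rw [assoc]
    exact op_mono (w_le_flat φ hφ z) (le_iSup (fun a => op (w a z) (ψ a)) a)
  constructor
  · intro y
    apply le_antisymm
    · refine iSup₂_le fun μ hμ => ?_
      obtain ⟨hcw, hso, hle⟩ := hμ
      have h1 : μ y ≤ ⨆ a, op (w a y) (μ a) := by
        have h := hso _ (w_flat y)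
        rwa [w_ssup] at h
      exact h1.trans (iSup_mono fun a => op_mono_r _ (hle a))
    · exact le_iSup₂_of_le (fun y => ⨆ a, op (w a y) (ψ a))
        ⟨fun x y' => g_cow ψ x y', θ_scott, fun x => θ_le x⟩ le_rfl
  · constructor
    · intro hso x
      have h1 := hso _ (w_flat x)
      rw [w_ssup] at h1
      exact le_antisymm h1 (θ_le x)
    · intro heq φ hφ
      rw [heq (ssup φ)]
      refine (θ_scott φ hφ).trans ?_
      exact iSup_mono fun x => op_mono_r _ (heq x).ge
end

section
/- Let Q be a commutative integral quantale. The Scott Q-topology of every F-domain X is sober: every point p of the Q-module O(ΣX) of Scott open sets is given by evaluation at a unique element of X, namely the supremum of the flat ideal φ(a) = p(w(a,-)). -/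
/-- The Scott `Q`-topology of an `F`-domain over a commutative integral
quantale is sober: every point `p` of the `Q`-module of Scott open sets is
evaluation at a unique element, namely the supremum of the flat ideal
`a ↦ p (w (a, -))`. -/
theorem F_domain_scott_topology_sober
    (Q : Type*) [CompleteLattice Q]
    (op : Q → Q → Q) (imp : Q → Q → Q)
    (comm : ∀ a b, op a b = op b a)
    (assoc : ∀ a b c, op (op a b) c = op a (op b c))
    (unit : ∀ a : Q, op ⊤ a = a)  -- integral: the unit is the top element
    (adj : ∀ p q r : Q, op p q ≤ r ↔ q ≤ imp p r)
    (X : Type*) (ord : X → X → Q)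
    (refl : ∀ x, (⊤ : Q) ≤ ord x x)
    (trans : ∀ x y z, op (ord y z) (ord x y) ≤ ord x z)
    (separated : ∀ x y, (⊤ : Q) ≤ ord x y ⊓ ord y x → x = y)
    -- the set of flat ideals of X
    (Flat : Set (X → Q))
    (hFlat : ∀ φ, φ ∈ Flat ↔
      ((∀ x y, op (φ y) (ord x y) ≤ φ x) ∧ ((⊤ : Q) ≤ ⨆ x, φ x) ∧
       (∀ ψ₁ ψ₂ : X → Q,
         (∀ x y, op (ord x y) (ψ₁ x) ≤ ψ₁ y) →
         (∀ x y, op (ord x y) (ψ₂ x) ≤ ψ₂ y) →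
         (⨆ x, op (φ x) (ψ₁ x ⊓ ψ₂ x)) =
           (⨆ x, op (φ x) (ψ₁ x)) ⊓ (⨆ x, op (φ x) (ψ₂ x)))))
    -- X is F-cocomplete
    (ssup : (X → Q) → X)
    (hssup : ∀ φ ∈ Flat, ∀ y, ord (ssup φ) y = ⨅ x, imp (φ x) (ord x y))
    -- the way-below Q-relation
    (w : X → X → Q)
    (hw : ∀ x y, w x y = ⨅ φ ∈ Flat, imp (ord y (ssup φ)) (φ x))
    -- X is an F-domain: x ↦ w(-,x) is left adjoint to sup : FX → X
    (hwflat : ∀ x, (fun a => w a x) ∈ Flat ∧ ssup (fun a => w a x) = x)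
    (hadj : ∀ x, ∀ φ ∈ Flat, (⨅ a, imp (w a x) (φ a)) = ord x (ssup φ))
    -- the Scott open sets of X
    (ScottOpens : Set (X → Q))
    (hScott : ∀ ψ, ψ ∈ ScottOpens ↔
      ((∀ x y, op (ord x y) (ψ x) ≤ ψ y) ∧
       ∀ φ ∈ Flat, ψ (ssup φ) ≤ ⨆ x, op (φ x) (ψ x)))
    -- a point p of the Q-module O(ΣX)
    (p : (X → Q) → Q)
    (ptop : p (fun _ => ⊤) = ⊤)
    (pinf : ∀ ψ₁ ∈ ScottOpens, ∀ ψ₂ ∈ ScottOpens, p (ψ₁ ⊓ ψ₂) = p ψ₁ ⊓ p ψ₂)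
    (pSup : ∀ S : Set (X → Q), S ⊆ ScottOpens → p (sSup S) = ⨆ ψ ∈ S, p ψ)
    (pact : ∀ ψ ∈ ScottOpens, ∀ r : Q, p (fun x => op (ψ x) r) = op (p ψ) r) :
    (fun a => p (fun y => w a y)) ∈ Flat ∧
    (∀ ψ ∈ ScottOpens, p ψ = ψ (ssup (fun a => p (fun y => w a y)))) ∧
    (∀ b : X, (∀ ψ ∈ ScottOpens, p ψ = ψ b) →
      b = ssup (fun a => p (fun y => w a y))) := by
  classical
  -- ### Basic quantale lemmas
  have op_mono_r : ∀ {q1 q2 q3 : Q}, q2 ≤ q3 → op q1 q2 ≤ op q1 q3 := by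
    intro q1 q2 q3 h
    exact (adj q1 q2 (op q1 q3)).2 (h.trans ((adj q1 q3 (op q1 q3)).1 le_rfl))
  have op_mono_l : ∀ {q1 q2 q3 : Q}, q1 ≤ q2 → op q1 q3 ≤ op q2 q3 := by
    intro q1 q2 q3 h; rw [comm q1 q3, comm q2 q3]; exact op_mono_r h
  have op_sup : ∀ (r : Q) {ι : Sort _} (f : ι → Q), op r (⨆ i, f i) = ⨆ i, op r (f i) := by
    intro r ι f
    refine le_antisymm ?_ (iSup_le fun i => op_mono_r (le_iSup f i))
    refine (adj _ _ _).2 (iSup_le fun i => (adj _ _ _).1 (le_iSup (fun i => op r (f i)) i))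
  have op_sup_l : ∀ (r : Q) {ι : Sort _} (f : ι → Q), op (⨆ i, f i) r = ⨆ i, op (f i) r := by
    intro r ι f; rw [comm, op_sup]; exact iSup_congr fun i => comm _ _
  have op_top : ∀ a : Q, op a ⊤ = a := fun a => by rw [comm, unit]
  have imp_top : ∀ r : Q, imp ⊤ r = r := by
    intro r
    refine le_antisymm ?_ ((adj _ _ _).1 (le_of_eq (unit r)))
    have h : op ⊤ (imp ⊤ r) ≤ r := (adj _ _ _).2 le_rfl
    rwa [unit] at h
  have imp_anti : ∀ {q1 q2 : Q} (r : Q), q1 ≤ q2 → imp q2 r ≤ imp q1 r := by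
    intro q1 q2 r h
    exact (adj _ _ _).1 ((op_mono_l h).trans ((adj _ _ _).2 le_rfl))
  have imp_mono_r : ∀ (q1 : Q) {q2 q3 : Q}, q2 ≤ q3 → imp q1 q2 ≤ imp q1 q3 := by
    intro q1 q2 q3 h
    exact (adj _ _ _).1 (((adj _ _ _).2 le_rfl).trans h)
  have imp_iInf : ∀ (r : Q) {ι : Sort _} (f : ι → Q), imp r (⨅ i, f i) = ⨅ i, imp r (f i) := by
    intro r ι f
    refine le_antisymm (le_iInf fun i => imp_mono_r r (iInf_le f i)) ?_
    refine (adj _ _ _).1 (le_iInf fun i => (adj _ _ _).2 (iInf_le _ i))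
  have imp_sup_l : ∀ (r : Q) {ι : Sort _} (f : ι → Q), imp (⨆ i, f i) r = ⨅ i, imp (f i) r := by
    intro r ι f
    refine le_antisymm (le_iInf fun i => imp_anti r (le_iSup f i)) ?_
    refine (adj _ _ _).1 ?_
    rw [op_sup_l]
    exact iSup_le fun i => (adj _ _ _).2 (iInf_le _ i)
  have curry : ∀ a b r : Q, imp (op a b) r = imp a (imp b r) := by
    intro a b r
    refine le_antisymm ?_ ?_
    · refine (adj _ _ _).1 ((adj _ _ _).1 ?_)
      rw [← assoc, comm b a]
      exact (adj _ _ _).2 le_rfl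
    · refine (adj _ _ _).1 ?_
      rw [comm a b, assoc]
      exact (op_mono_r ((adj _ _ _).2 le_rfl)).trans ((adj _ _ _).2 le_rfl)
  have ordxx : ∀ x : X, ord x x = ⊤ := fun x => le_antisymm le_top (refl x)
  -- ### Flat ideal accessors
  have fl_dc : ∀ {φ : X → Q}, φ ∈ Flat → ∀ a b, op (φ b) (ord a b) ≤ φ a :=
    fun h => ((hFlat _).1 h).1
  have fl_inh : ∀ {φ : X → Q}, φ ∈ Flat → (⊤ : Q) ≤ ⨆ x, φ x :=
    fun h => ((hFlat _).1 h).2.1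
  have fl_fc : ∀ {φ : X → Q}, φ ∈ Flat → ∀ ψ₁ ψ₂ : X → Q,
      (∀ x y, op (ord x y) (ψ₁ x) ≤ ψ₁ y) →
      (∀ x y, op (ord x y) (ψ₂ x) ≤ ψ₂ y) →
      (⨆ x, op (φ x) (ψ₁ x ⊓ ψ₂ x)) =
        (⨆ x, op (φ x) (ψ₁ x)) ⊓ (⨆ x, op (φ x) (ψ₂ x)) :=
    fun h => ((hFlat _).1 h).2.2
  have w_dc : ∀ (x a b : X), op (w b x) (ord a b) ≤ w a x := fun x => fl_dc (hwflat x).1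
  have w_inh : ∀ x : X, (⊤ : Q) ≤ ⨆ a, w a x := fun x => fl_inh (hwflat x).1
  -- ### w is monotone in the second variable
  have wm : ∀ (a x y : X), op (ord x y) (w a x) ≤ w a y := by
    intro a x y
    rw [hw a y]
    refine le_iInf fun μ => le_iInf fun hμ => ?_
    refine (adj _ _ _).1 ?_
    have hwle : w a x ≤ imp (ord x (ssup μ)) (μ a) := by
      rw [hw a x]; exact iInf₂_le μ hμ
    calc op (ord y (ssup μ)) (op (ord x y) (w a x))
        = op (op (ord y (ssup μ)) (ord x y)) (w a x) := (assoc _ _ _).symm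
      _ ≤ op (ord x (ssup μ)) (w a x) := op_mono_l (trans x y (ssup μ))
      _ ≤ μ a := (adj _ _ _).2 hwle
  -- ### principal ideals are flat, with the expected suprema
  have sup_down : ∀ (ψ : X → Q), (∀ x y, op (ord x y) (ψ x) ≤ ψ y) →
      ∀ y, (⨆ x, op (ord x y) (ψ x)) = ψ y := by
    intro ψ hup y
    refine le_antisymm (iSup_le fun x => hup x y) ?_
    exact le_iSup_of_le y (le_of_eq (by rw [ordxx, unit]))
  have down_flat : ∀ y : X, (fun x => ord x y) ∈ Flat := by
    intro y
    rw [hFlat]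
    refine ⟨fun a b => trans a b y, le_iSup_of_le y (refl y), ?_⟩
    intro ψ₁ ψ₂ h₁ h₂
    have hmin : ∀ x z : X, op (ord x z) (ψ₁ x ⊓ ψ₂ x) ≤ ψ₁ z ⊓ ψ₂ z := fun x z =>
      le_inf ((op_mono_r inf_le_left).trans (h₁ x z)) ((op_mono_r inf_le_right).trans (h₂ x z))
    rw [sup_down ψ₁ h₁, sup_down ψ₂ h₂, sup_down (fun x => ψ₁ x ⊓ ψ₂ x) hmin]
  have hords : ∀ y z : X, ord (ssup (fun x => ord x y)) z = ord y z := by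
    intro y z
    rw [hssup _ (down_flat y)]
    refine le_antisymm (iInf_le_of_le y (by rw [ordxx, imp_top])) ?_
    refine le_iInf fun x => (adj _ _ _).1 ?_
    rw [comm]; exact trans x y z
  have sdown : ∀ y : X, ssup (fun x => ord x y) = y := by
    intro y
    refine separated _ _ (le_inf ?_ ?_)
    · rw [hords y y, ordxx]
    · rw [← hords y (ssup (fun x => ord x y))]; exact refl _
  have w_le_ord : ∀ a y : X, w a y ≤ ord a y := by
    intro a y
    have h : w a y ≤ imp (ord y (ssup fun x => ord x y)) (ord a y) := by
      rw [hw a y]; exact iInf₂_le _ (down_flat y)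
    rwa [sdown, ordxx, imp_top] at h
  -- the value of ⨅ a, imp (w a x) (ord a z)
  have inner : ∀ x z : X, (⨅ a, imp (w a x) (ord a z)) = ord x z := by
    intro x z
    have h := hssup _ (hwflat x).1 z
    rw [(hwflat x).2] at h
    exact h.symm
  -- upper-set property of "star" functions
  have star_upper : ∀ (ψ : X → Q) (x y : X),
      op (ord x y) (⨆ a, op (w a x) (ψ a)) ≤ ⨆ a, op (w a y) (ψ a) := by
    intro ψ x y
    rw [op_sup]
    refine iSup_le fun a => le_iSup_of_le a ?_
    calc op (ord x y) (op (w a x) (ψ a))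
        = op (op (ord x y) (w a x)) (ψ a) := (assoc _ _ _).symm
      _ ≤ op (w a y) (ψ a) := op_mono_l (wm a x y)
  -- ### key lemma: w interacts with suprema of flat ideals
  have wkey : ∀ (φ : X → Q), φ ∈ Flat → ∀ a, w a (ssup φ) ≤ ⨆ x, op (φ x) (w a x) := by
    intro φ hφ a
    set ρ : X → Q := fun b => ⨆ x, op (φ x) (w b x) with hρ
    have ρflat : ρ ∈ Flat := by
      rw [hFlat]
      refine ⟨?_, ?_, ?_⟩
      · intro a' b
        calc op (ρ b) (ord a' b)
            = ⨆ x, op (op (φ x) (w b x)) (ord a' b) := op_sup_l _ _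
          _ ≤ ρ a' := iSup_le fun x => le_iSup_of_le x
              (by rw [assoc]; exact op_mono_r (w_dc x a' b))
      · refine (fl_inh hφ).trans (iSup_le fun x => ?_)
        calc φ x = op (φ x) ⊤ := (op_top _).symm
          _ ≤ op (φ x) (⨆ a', w a' x) := op_mono_r (w_inh x)
          _ = ⨆ a', op (φ x) (w a' x) := op_sup _ _
          _ ≤ ⨆ b, ρ b := iSup_le fun a' => le_iSup_of_le a' (le_iSup_of_le x le_rfl)
      · intro ψ₁ ψ₂ h₁ h₂
        have srew : ∀ ψ : X → Q,
            (⨆ b, op (ρ b) (ψ b)) = ⨆ x, op (φ x) (⨆ a', op (w a' x) (ψ a')) := by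
          intro ψ
          calc (⨆ b, op (ρ b) (ψ b))
              = ⨆ b, ⨆ x, op (op (φ x) (w b x)) (ψ b) := iSup_congr fun b => op_sup_l _ _
            _ = ⨆ x, ⨆ b, op (op (φ x) (w b x)) (ψ b) := iSup_comm
            _ = ⨆ x, op (φ x) (⨆ a', op (w a' x) (ψ a')) := by
                refine iSup_congr fun x => ?_
                rw [op_sup]
                exact iSup_congr fun b => assoc _ _ _
        have s2 : ∀ x : X, (⨆ a', op (w a' x) (ψ₁ a' ⊓ ψ₂ a')) =
            (⨆ a', op (w a' x) (ψ₁ a')) ⊓ (⨆ a', op (w a' x) (ψ₂ a')) :=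
          fun x => fl_fc (hwflat x).1 ψ₁ ψ₂ h₁ h₂
        rw [srew (fun b => ψ₁ b ⊓ ψ₂ b), srew ψ₁, srew ψ₂]
        rw [show (⨆ x, op (φ x) (⨆ a', op (w a' x) (ψ₁ a' ⊓ ψ₂ a')))
            = ⨆ x, op (φ x) ((⨆ a', op (w a' x) (ψ₁ a')) ⊓ (⨆ a', op (w a' x) (ψ₂ a'))) from
          iSup_congr fun x => by rw [s2 x]]
        exact fl_fc hφ _ _ (star_upper ψ₁) (star_upper ψ₂)
    have ρord : ∀ z, ord (ssup ρ) z = ord (ssup φ) z := by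
      intro z
      rw [hssup ρ ρflat z, hssup φ hφ z]
      calc (⨅ b, imp (ρ b) (ord b z))
          = ⨅ b, ⨅ x, imp (op (φ x) (w b x)) (ord b z) :=
            iInf_congr fun b => imp_sup_l _ _
        _ = ⨅ b, ⨅ x, imp (φ x) (imp (w b x) (ord b z)) :=
            iInf_congr fun b => iInf_congr fun x => curry _ _ _
        _ = ⨅ x, ⨅ b, imp (φ x) (imp (w b x) (ord b z)) := iInf_comm
        _ = ⨅ x, imp (φ x) (⨅ b, imp (w b x) (ord b z)) :=
            iInf_congr fun x => (imp_iInf _ _).symm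
        _ = ⨅ x, imp (φ x) (ord x z) := iInf_congr fun x => by rw [inner x z]
    have ρsup : ssup ρ = ssup φ := by
      refine separated _ _ (le_inf ?_ ?_)
      · rw [ρord (ssup φ), ordxx]
      · rw [← ρord (ssup ρ)]; exact refl _
    have h : w a (ssup φ) ≤ imp (ord (ssup φ) (ssup ρ)) (ρ a) := by
      rw [hw a (ssup φ)]; exact iInf₂_le ρ ρflat
    rwa [ρsup, ordxx, imp_top] at h
  -- ### each w (a, -) is Scott open
  have w_scott : ∀ a : X, (fun y => w a y) ∈ ScottOpens := by
    intro a
    rw [hScott]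
    exact ⟨fun x y => wm a x y, fun μ hμ => wkey μ hμ a⟩
  have smul_scott : ∀ ψ ∈ ScottOpens, ∀ r : Q, (fun x => op (ψ x) r) ∈ ScottOpens := by
    intro ψ hψ r
    rw [hScott] at hψ ⊢
    obtain ⟨h1, h2⟩ := hψ
    constructor
    · intro x y
      calc op (ord x y) (op (ψ x) r) = op (op (ord x y) (ψ x)) r := (assoc _ _ _).symm
        _ ≤ op (ψ y) r := op_mono_l (h1 x y)
    · intro μ hμ
      calc op (ψ (ssup μ)) r ≤ op (⨆ x, op (μ x) (ψ x)) r := op_mono_l (h2 μ hμ)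
        _ = ⨆ x, op (op (μ x) (ψ x)) r := op_sup_l _ _
        _ ≤ ⨆ x, op (μ x) (op (ψ x) r) := iSup_mono fun x => le_of_eq (assoc _ _ _)
  have star_scott : ∀ ψ : X → Q, (fun y => ⨆ a, op (w a y) (ψ a)) ∈ ScottOpens := by
    intro ψ
    rw [hScott]
    refine ⟨star_upper ψ, ?_⟩
    intro μ hμ
    calc (⨆ a, op (w a (ssup μ)) (ψ a))
        ≤ ⨆ a, op (⨆ x, op (μ x) (w a x)) (ψ a) :=
          iSup_mono fun a => op_mono_l (wkey μ hμ a)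
      _ = ⨆ a, ⨆ x, op (op (μ x) (w a x)) (ψ a) := iSup_congr fun a => op_sup_l _ _
      _ = ⨆ x, ⨆ a, op (op (μ x) (w a x)) (ψ a) := iSup_comm
      _ = ⨆ x, op (μ x) (⨆ a, op (w a x) (ψ a)) := by
          refine iSup_congr fun x => ?_
          rw [op_sup]
          exact iSup_congr fun a => assoc _ _ _
  have pmono : ∀ ψ₁ ∈ ScottOpens, ∀ ψ₂ ∈ ScottOpens, ψ₁ ≤ ψ₂ → p ψ₁ ≤ p ψ₂ := by
    intro ψ₁ h₁ ψ₂ h₂ hle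
    have h := pinf ψ₁ h₁ ψ₂ h₂
    rw [inf_eq_left.2 hle] at h
    rw [h]
    exact inf_le_right
  have p_star : ∀ ψ : X → Q,
      p (fun y => ⨆ a, op (w a y) (ψ a)) = ⨆ a, op (p (fun y => w a y)) (ψ a) := by
    intro ψ
    have hfun : (fun y => ⨆ a, op (w a y) (ψ a)) =
        sSup (Set.range fun a => fun y => op (w a y) (ψ a)) := by
      funext y
      rw [sSup_range, iSup_apply]
    rw [hfun, pSup _ (by rintro g ⟨a, rfl⟩; exact smul_scott _ (w_scott a) (ψ a)), iSup_range]
    exact iSup_congr fun a => pact _ (w_scott a) (ψ a)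
  -- ### the candidate flat ideal
  have φ₀dc : ∀ a b : X, op (p (fun y => w b y)) (ord a b) ≤ p (fun y => w a y) := by
    intro a b
    rw [← pact _ (w_scott b) (ord a b)]
    exact pmono _ (smul_scott _ (w_scott b) (ord a b)) _ (w_scott a) (fun y => w_dc y a b)
  have φ₀flat : (fun a => p (fun y => w a y)) ∈ Flat := by
    rw [hFlat]
    refine ⟨φ₀dc, ?_, ?_⟩
    · have hfun : (fun _ : X => (⊤ : Q)) = sSup (Set.range fun a => fun y => w a y) := by
        funext y
        rw [sSup_range, iSup_apply]
        exact (le_antisymm le_top (w_inh y)).symm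
      calc (⊤ : Q) = p (fun _ => ⊤) := ptop.symm
        _ = ⨆ a, p (fun y => w a y) := by
            rw [hfun, pSup _ (by rintro g ⟨a, rfl⟩; exact w_scott a), iSup_range]
        _ ≤ ⨆ x, p fun y => w x y := le_rfl
    · intro ψ₁ ψ₂ h₁ h₂
      have hmin : (fun y => ⨆ a, op (w a y) (ψ₁ a ⊓ ψ₂ a)) =
          (fun y => ⨆ a, op (w a y) (ψ₁ a)) ⊓ (fun y => ⨆ a, op (w a y) (ψ₂ a)) := by
        funext y
        rw [Pi.inf_apply]
        exact fl_fc (hwflat y).1 ψ₁ ψ₂ h₁ h₂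
      calc (⨆ x, op (p (fun y => w x y)) (ψ₁ x ⊓ ψ₂ x))
          = p (fun y => ⨆ a, op (w a y) (ψ₁ a ⊓ ψ₂ a)) := (p_star (fun a => ψ₁ a ⊓ ψ₂ a)).symm
        _ = p ((fun y => ⨆ a, op (w a y) (ψ₁ a)) ⊓ (fun y => ⨆ a, op (w a y) (ψ₂ a))) := by
            rw [hmin]
        _ = p (fun y => ⨆ a, op (w a y) (ψ₁ a)) ⊓ p (fun y => ⨆ a, op (w a y) (ψ₂ a)) :=
            pinf _ (star_scott ψ₁) _ (star_scott ψ₂)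
        _ = (⨆ x, op (p (fun y => w x y)) (ψ₁ x)) ⊓ (⨆ x, op (p (fun y => w x y)) (ψ₂ x)) := by
            rw [p_star ψ₁, p_star ψ₂]
  -- ### evaluation at the supremum
  have hstar_eq : ∀ ψ ∈ ScottOpens, (fun y => ⨆ a, op (w a y) (ψ a)) = ψ := by
    intro ψ hψ
    obtain ⟨h1, h2⟩ := (hScott ψ).1 hψ
    funext y
    refine le_antisymm (iSup_le fun a => (op_mono_l (w_le_ord a y)).trans (h1 a y)) ?_
    have h := h2 _ (hwflat y).1
    rwa [(hwflat y).2] at h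
  have peq : ∀ ψ ∈ ScottOpens, p ψ = ⨆ a, op (p (fun y => w a y)) (ψ a) := by
    intro ψ hψ
    conv_lhs => rw [← hstar_eq ψ hψ]
    exact p_star ψ
  have hord : ∀ a : X, p (fun y => w a y) ≤ ord a (ssup (fun a => p (fun y => w a y))) := by
    intro a
    rw [← hadj a _ φ₀flat]
    refine le_iInf fun b => (adj _ _ _).1 ?_
    calc op (w b a) (p (fun y => w a y)) = op (p (fun y => w a y)) (w b a) := comm _ _
      _ ≤ op (p (fun y => w a y)) (ord b a) := op_mono_r (w_le_ord b a)
      _ ≤ p (fun y => w b y) := φ₀dc b a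
  refine ⟨φ₀flat, ?_, ?_⟩
  · intro ψ hψ
    obtain ⟨h1, h2⟩ := (hScott ψ).1 hψ
    rw [peq ψ hψ]
    refine le_antisymm (iSup_le fun a => ?_) (h2 _ φ₀flat)
    calc op (p (fun y => w a y)) (ψ a)
        ≤ op (ord a (ssup (fun a => p (fun y => w a y)))) (ψ a) := op_mono_l (hord a)
      _ ≤ ψ (ssup (fun a => p (fun y => w a y))) := h1 a _
  · intro b hb
    have hfun : (fun a => p (fun y => w a y)) = fun a => w a b := by
      funext a
      exact hb _ (w_scott a)
    rw [hfun, (hwflat b).2]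
end

section
/- Let & be a continuous t-norm on [0,1], Q = ([0,1],&), and φ a flat ideal of ([0,1], α_L) where α_L(x,y) = x→y. If c is idempotent and c ≤ φ(c), then φ(c) is idempotent. -/
open unitInterval

instance : Fact ((0:ℝ) ≤ 1) := ⟨zero_le_one⟩

/-- Let `&` be a continuous t-norm on `[0,1]` and `φ` a flat ideal of
`([0,1], α_L)`. If `c` is idempotent and `c ≤ φ c`, then `φ c` is
idempotent. -/
theorem flat_ideal_idempotent_value
    (tnorm : I → I → I)
    (comm : ∀ x y, tnorm x y = tnorm y x)
    (assoc : ∀ x y z, tnorm (tnorm x y) z = tnorm x (tnorm y z))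
    (unit : ∀ x, tnorm 1 x = x)
    (mono : ∀ x, Monotone (tnorm x))
    (cont : Continuous (fun q : I × I => tnorm q.1 q.2))
    (imp : I → I → I)
    (himp : ∀ x z, imp x z = sSup {q | tnorm x q ≤ z})
    -- φ is a flat ideal of ([0,1], α_L)
    (φ : I → I)
    (weight : ∀ x y, tnorm (φ y) (imp x y) ≤ φ x)
    (inhabited : (⨆ x, φ x) = 1)
    (flat : ∀ ψ₁ ψ₂ : I → I,
      (∀ x y, tnorm (imp x y) (ψ₁ x) ≤ ψ₁ y) →
      (∀ x y, tnorm (imp x y) (ψ₂ x) ≤ ψ₂ y) →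
      (⨆ x, tnorm (φ x) (ψ₁ x ⊓ ψ₂ x)) =
        (⨆ x, tnorm (φ x) (ψ₁ x)) ⊓ (⨆ x, tnorm (φ x) (ψ₂ x)))
    (c : I) (idem : tnorm c c = c) (hc : c ≤ φ c) :
    tnorm (φ c) (φ c) = φ c := by
  -- basic monotonicity in both arguments
  have mono₂ : ∀ {x x' y y' : I}, x ≤ x' → y ≤ y' → tnorm x y ≤ tnorm x' y' := by
    intro x x' y y' hx hy
    calc tnorm x y ≤ tnorm x y' := mono x hy
      _ = tnorm y' x := comm _ _
      _ ≤ tnorm y' x' := mono _ hx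
      _ = tnorm x' y' := comm _ _
  have le_right : ∀ x y : I, tnorm x y ≤ y := fun x y => by
    calc tnorm x y ≤ tnorm 1 y := mono₂ le_one' le_rfl
      _ = y := unit y
  -- easy residuation direction
  have le_imp : ∀ {x q z : I}, tnorm x q ≤ z → q ≤ imp x z := by
    intro x q z h
    rw [himp]; exact le_sSup h
  -- hard residuation direction via compactness & continuity
  have imp_le : ∀ x z : I, tnorm x (imp x z) ≤ z := by
    intro x z
    rw [himp]
    have hne : ({q : I | tnorm x q ≤ z}).Nonempty :=
      ⟨0, le_trans (le_right x 0) nonneg'⟩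
    have hcl : IsClosed {q : I | tnorm x q ≤ z} := by
      have hco : Continuous (fun q : I => tnorm x q) :=
        cont.comp (Continuous.prodMk continuous_const continuous_id)
      exact isClosed_le hco continuous_const
    exact (hcl.isCompact).sSup_mem hne
  -- an idempotent element acts as the identity below itself
  have idem_min : ∀ q : I, q ≤ c → tnorm c q = q := by
    intro q hq
    have hco : Continuous (fun t : I => tnorm c t) :=
      cont.comp (Continuous.prodMk continuous_const continuous_id)
    have h0 : tnorm c 0 = 0 := le_antisymm (le_right c 0) nonneg'
    have h1 : tnorm c 1 = c := by rw [comm, unit]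
    have hmem : q ∈ Set.Icc (tnorm c 0) (tnorm c 1) := by
      rw [h0, h1]; exact ⟨nonneg', hq⟩
    obtain ⟨t, ht⟩ := intermediate_value_univ 0 1 hco hmem
    have ht' : tnorm c t = q := ht
    calc tnorm c q = tnorm c (tnorm c t) := by rw [ht']
      _ = tnorm (tnorm c c) t := (assoc c c t).symm
      _ = tnorm c t := by rw [idem]
      _ = q := ht'
  -- φ is antitone
  have anti : ∀ {x y : I}, x ≤ y → φ y ≤ φ x := by
    intro x y hxy
    have h1 : imp x y = 1 := by
      apply le_antisymm le_one'
      apply le_imp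
      rw [comm, unit]; exact hxy
    have h2 := weight x y
    rw [h1, comm, unit] at h2
    exact h2
  -- the two coweights
  have cow₁ : ∀ x y, tnorm (imp x y) (imp c x) ≤ imp c y := by
    intro x y
    apply le_imp
    calc tnorm c (tnorm (imp x y) (imp c x))
        = tnorm (tnorm c (imp c x)) (imp x y) := by
          rw [assoc, comm (imp x y) (imp c x), ← assoc, assoc]
      _ ≤ tnorm x (imp x y) := mono₂ (imp_le c x) le_rfl
      _ ≤ y := imp_le x y
  have cow₂ : ∀ x y : I, tnorm (imp x y) (φ c) ≤ φ c := fun x y => le_right _ _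
  -- φ ⋔ ψ₁ = φ c
  have s1 : (⨆ x, tnorm (φ x) (imp c x)) = φ c := by
    apply le_antisymm
    · exact iSup_le fun x => weight c x
    · have hcc : imp c c = 1 := by
        apply le_antisymm le_one'
        apply le_imp; rw [comm, unit]
      calc φ c = tnorm (φ c) (imp c c) := by rw [hcc, comm, unit]
        _ ≤ ⨆ x, tnorm (φ x) (imp c x) := le_iSup (fun x => tnorm (φ x) (imp c x)) c
  -- φ ⋔ ψ₂ = φ c
  have s2 : (⨆ x, tnorm (φ x) (φ c)) = φ c := by
    apply le_antisymm
    · apply iSup_le; intro x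
      calc tnorm (φ x) (φ c) ≤ tnorm 1 (φ c) := mono₂ le_one' le_rfl
        _ = φ c := unit _
    · have hg : Continuous (fun t : I => tnorm t (φ c)) :=
        cont.comp (Continuous.prodMk continuous_id continuous_const)
      have hS : sSup (Set.range φ) ∈ closure (Set.range φ) :=
        sSup_mem_closure (Set.range_nonempty φ)
      have himg : tnorm (sSup (Set.range φ)) (φ c) ∈
          closure ((fun t => tnorm t (φ c)) '' Set.range φ) :=
        image_closure_subset_closure_image hg ⟨_, hS, rfl⟩
      have hub : ∀ y ∈ (fun t => tnorm t (φ c)) '' Set.range φ,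
          y ≤ ⨆ x, tnorm (φ x) (φ c) := by
        rintro y ⟨t, ⟨x, rfl⟩, rfl⟩
        exact le_iSup (fun x => tnorm (φ x) (φ c)) x
      have hcl : IsClosed {y : I | y ≤ ⨆ x, tnorm (φ x) (φ c)} :=
        isClosed_le continuous_id continuous_const
      have hle : tnorm (sSup (Set.range φ)) (φ c) ≤ ⨆ x, tnorm (φ x) (φ c) :=
        hcl.closure_subset_iff.mpr hub himg
      have hone : sSup (Set.range φ) = 1 := by rw [← inhabited]; rfl
      rwa [hone, unit] at hle
  -- every term of the min-sup is below tnorm (φ c) (φ c)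
  have key : (⨆ x, tnorm (φ x) (imp c x ⊓ φ c)) ≤ tnorm (φ c) (φ c) := by
    apply iSup_le; intro x
    rcases le_or_gt c x with hcx | hlt
    · exact mono₂ (anti hcx) inf_le_right
    · have h1 : imp c x ≤ c := by
        by_contra h
        push_neg at h
        have hcle : c ≤ tnorm c (imp c x) := by
          calc c = tnorm c c := idem.symm
            _ ≤ tnorm c (imp c x) := mono c h.le
        exact absurd (hcle.trans (imp_le c x)) (not_le.mpr hlt)
      have h2 : imp c x ≤ x := by
        have h3 := imp_le c x
        rwa [idem_min _ h1] at h3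
      calc tnorm (φ x) (imp c x ⊓ φ c) ≤ imp c x ⊓ φ c := le_right _ _
        _ ≤ x := le_trans inf_le_left h2
        _ ≤ c := hlt.le
        _ = tnorm c c := idem.symm
        _ ≤ tnorm (φ c) (φ c) := mono₂ hc hc
  have hflat := flat (fun x => imp c x) (fun _ => φ c) cow₁ cow₂
  simp only [s1, s2, inf_idem] at hflat
  exact le_antisymm (le_right _ _) (hflat.symm.trans_le key)
end

section
/- Let & be a continuous t-norm and Q = ([0,1],&). For x ∈ [0,1], define d(x): [0,1]→[0,1] by d(x)(t) = t→0 if x=0; d(x)(t)=1 if x>0 and t=0; d(x)(t) = x⁺ ∧ (t→x) if x>0 and t>0, where x⁺ is the least idempotent ≥ x. Then d(x) is the smallest flat ideal of ([0,1],α_L) whose supremum is ≥ x. -/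
open unitInterval

variable {tnorm : I → I → I} {imp : I → I → I}

lemma T_one (comm : ∀ x y, tnorm x y = tnorm y x) (unit : ∀ x, tnorm 1 x = x)
    (a : I) : tnorm a 1 = a := by rw [comm, unit]

lemma T_mono2 (comm : ∀ x y, tnorm x y = tnorm y x) (mono : ∀ x, Monotone (tnorm x))
    {a a' b b' : I} (h : a ≤ a') (h' : b ≤ b') : tnorm a b ≤ tnorm a' b' := by
  calc tnorm a b ≤ tnorm a b' := mono a h'
    _ = tnorm b' a := comm _ _
    _ ≤ tnorm b' a' := mono b' h
    _ = tnorm a' b' := comm _ _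

lemma T_zero (comm : ∀ x y, tnorm x y = tnorm y x) (unit : ∀ x, tnorm 1 x = x)
    (mono : ∀ x, Monotone (tnorm x)) (a : I) : tnorm a 0 = 0 :=
  le_antisymm (by simpa [unit] using T_mono2 comm mono (le_one' (t := a)) (le_refl (0:I))) nonneg'

lemma T_le_left (comm : ∀ x y, tnorm x y = tnorm y x) (unit : ∀ x, tnorm 1 x = x)
    (mono : ∀ x, Monotone (tnorm x)) (a b : I) : tnorm a b ≤ a := by
  simpa [T_one comm unit] using T_mono2 comm mono (le_refl a) (le_one' (t := b))

lemma T_le_right (comm : ∀ x y, tnorm x y = tnorm y x) (unit : ∀ x, tnorm 1 x = x)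
    (mono : ∀ x, Monotone (tnorm x)) (a b : I) : tnorm a b ≤ b := by
  simpa [unit] using T_mono2 comm mono (le_one' (t := a)) (le_refl b)

lemma T_contAt (cont : Continuous (fun q : I × I => tnorm q.1 q.2)) (a b : I) :
    ContinuousAt (tnorm a) b :=
  (cont.comp (continuous_const.prodMk continuous_id)).continuousAt

lemma T_sSup (comm : ∀ x y, tnorm x y = tnorm y x) (unit : ∀ x, tnorm 1 x = x)
    (mono : ∀ x, Monotone (tnorm x)) (cont : Continuous (fun q : I × I => tnorm q.1 q.2))
    (a : I) (S : Set I) : tnorm a (sSup S) = sSup (tnorm a '' S) :=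
  Monotone.map_sSup_of_continuousAt (T_contAt cont a _) (mono a) (T_zero comm unit mono a)

lemma T_iSup (comm : ∀ x y, tnorm x y = tnorm y x) (unit : ∀ x, tnorm 1 x = x)
    (mono : ∀ x, Monotone (tnorm x)) (cont : Continuous (fun q : I × I => tnorm q.1 q.2))
    (a : I) {ι : Sort*} (f : ι → I) : tnorm a (⨆ i, f i) = ⨆ i, tnorm a (f i) :=
  Monotone.map_iSup_of_continuousAt (T_contAt cont a _) (mono a) (T_zero comm unit mono a)

lemma T_iInf (mono : ∀ x, Monotone (tnorm x)) (cont : Continuous (fun q : I × I => tnorm q.1 q.2))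
    (a : I) {ι : Sort*} [Nonempty ι] (f : ι → I) : tnorm a (⨅ i, f i) = ⨅ i, tnorm a (f i) :=
  Monotone.map_ciInf_of_continuousAt (T_contAt cont a _) (mono a)

section
variable (comm : ∀ x y, tnorm x y = tnorm y x)
  (assoc : ∀ x y z, tnorm (tnorm x y) z = tnorm x (tnorm y z))
  (unit : ∀ x, tnorm 1 x = x)
  (mono : ∀ x, Monotone (tnorm x))
  (cont : Continuous (fun q : I × I => tnorm q.1 q.2))
  (himp : ∀ x z, imp x z = sSup {q | tnorm x q ≤ z})

include himp in
lemma le_imp {a z q : I} (h : tnorm a q ≤ z) : q ≤ imp a z := by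
  rw [himp]; exact le_sSup h

include comm unit mono cont himp in
lemma T_imp_le (a z : I) : tnorm a (imp a z) ≤ z := by
  rw [himp, T_sSup comm unit mono cont]
  exact sSup_le (by rintro y ⟨q, hq, rfl⟩; exact hq)

include comm unit mono cont himp in
lemma imp_elim {a z q : I} (h : q ≤ imp a z) : tnorm a q ≤ z :=
  le_trans (mono a h) (T_imp_le comm unit mono cont himp a z)

include comm unit himp in
lemma imp_eq_one {a z : I} (h : a ≤ z) : imp a z = 1 :=
  le_antisymm le_one' (le_imp himp (by rw [T_one comm unit]; exact h))

include himp comm unit mono cont in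
lemma imp_mono2 {a z z' : I} (h : z ≤ z') : imp a z ≤ imp a z' :=
  le_imp himp ((T_imp_le comm unit mono cont himp a z).trans h)

include comm unit mono himp in
lemma le_imp_self (a b : I) : b ≤ imp a b := le_imp himp (T_le_right comm unit mono a b)

include comm unit mono cont in
lemma T_div {s t : I} (h : t ≤ s) : ∃ c, tnorm s c = t := by
  have hf : Continuous (tnorm s) := cont.comp (continuous_const.prodMk continuous_id)
  have h2 := intermediate_value_univ (0 : I) 1 hf
  have ht : t ∈ Set.Icc (tnorm s 0) (tnorm s 1) := by
    rw [T_zero comm unit mono, T_one comm unit]; exact ⟨nonneg', h⟩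
  exact h2 ht

include comm assoc unit mono cont himp in
lemma T_imp_min (s t : I) : tnorm s (imp s t) = s ⊓ t := by
  refine le_antisymm (le_inf (T_le_left comm unit mono _ _) (T_imp_le comm unit mono cont himp s t)) ?_
  rcases le_total t s with h | h
  · obtain ⟨c, hc⟩ := T_div comm unit mono cont h
    calc s ⊓ t ≤ t := inf_le_right
      _ = tnorm s c := hc.symm
      _ ≤ tnorm s (imp s t) := mono s (le_imp himp hc.le)
  · rw [imp_eq_one comm unit himp h, T_one comm unit]; exact inf_le_left

include comm assoc unit mono cont himp in
lemma T_idem_min {e : I} (he : tnorm e e = e) (a : I) : tnorm e a = e ⊓ a := by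
  rcases le_total a e with h | h
  · have h1 : tnorm e (imp e a) = a := by
      rw [T_imp_min comm assoc unit mono cont himp]; exact inf_eq_right.2 h
    have h2 : tnorm e a = a := by
      conv_lhs => rw [← h1, ← assoc, he, h1]
    rw [h2]; exact (inf_eq_right.2 h).symm
  · refine le_antisymm (le_inf (T_le_left comm unit mono _ _) (T_le_right comm unit mono _ _)) ?_
    calc e ⊓ a ≤ e := inf_le_left
      _ = tnorm e e := he.symm
      _ ≤ tnorm e a := mono e h
end

lemma lat_easy {α} [Lattice α] (a b c d e : α) :
    (a ⊓ b) ⊔ (c ⊓ (d ⊓ e)) ≤ (a ⊔ (c ⊓ d)) ⊓ (b ⊔ (c ⊓ e)) :=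
  sup_le (le_inf (le_sup_of_le_left inf_le_left) (le_sup_of_le_left inf_le_right))
    (le_inf (le_sup_of_le_right (inf_le_inf_left c inf_le_left))
      (le_sup_of_le_right (inf_le_inf_left c inf_le_right)))

lemma lat_hard {α} [LinearOrder α] (a b c d e : α) (h1 : a ≤ d) (h2 : b ≤ e) :
    (a ⊔ (c ⊓ d)) ⊓ (b ⊔ (c ⊓ e)) ≤ (a ⊓ b) ⊔ (c ⊓ (d ⊓ e)) := by
  rcases le_total a (c ⊓ d) with h3 | h3 <;> rcases le_total b (c ⊓ e) with h4 | h4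
  · rw [sup_eq_right.2 h3, sup_eq_right.2 h4]
    exact le_sup_of_le_right (le_inf (inf_le_of_left_le inf_le_left)
      (le_inf (inf_le_of_left_le inf_le_right) (inf_le_of_right_le inf_le_right)))
  · rw [sup_eq_right.2 h3, sup_eq_left.2 h4]
    exact le_sup_of_le_right (le_inf (inf_le_of_left_le inf_le_left)
      (le_inf (inf_le_of_left_le inf_le_right) (inf_le_of_right_le h2)))
  · rw [sup_eq_left.2 h3, sup_eq_right.2 h4]
    exact le_sup_of_le_right (le_inf (inf_le_of_right_le inf_le_left)
      (le_inf (inf_le_of_left_le h1) (inf_le_of_right_le inf_le_right)))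
  · rw [sup_eq_left.2 h3, sup_eq_left.2 h4]; exact le_sup_left
/-- For a continuous t-norm `&` on `[0,1]` and `x ∈ [0,1]`, the map `d x`
defined by `d x t = t → 0` if `x = 0`, `d x 0 = 1` if `x > 0`, and
`d x t = x⁺ ⊓ (t → x)` if `x, t > 0` (where `x⁺` is the least idempotent
above `x`) is the smallest flat ideal of `([0,1], α_L)` whose supremum
(which is `d x 1`) is `≥ x`. -/
theorem smallest_flat_ideal
    (tnorm : I → I → I)
    (comm : ∀ x y, tnorm x y = tnorm y x)
    (assoc : ∀ x y z, tnorm (tnorm x y) z = tnorm x (tnorm y z))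
    (unit : ∀ x, tnorm 1 x = x)
    (mono : ∀ x, Monotone (tnorm x))
    (cont : Continuous (fun q : I × I => tnorm q.1 q.2))
    (imp : I → I → I)
    (himp : ∀ x z, imp x z = sSup {q | tnorm x q ≤ z})
    (x : I)
    -- x⁺ : the least idempotent element ≥ x
    (xp : I) (hxp_idem : tnorm xp xp = xp) (hxp_ge : x ≤ xp)
    (hxp_least : ∀ q, tnorm q q = q → x ≤ q → xp ≤ q)
    -- the map d(x)
    (d : I → I)
    (hd : ∀ t, d t = if x = 0 then imp t 0
                     else if t = 0 then 1 else xp ⊓ imp t x) :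
    -- d is a flat ideal of ([0,1], α_L) ...
    (∀ s t, tnorm (d t) (imp s t) ≤ d s) ∧
    ((⨆ t, d t) = 1) ∧
    (∀ ψ₁ ψ₂ : I → I,
      (∀ s t, tnorm (imp s t) (ψ₁ s) ≤ ψ₁ t) →
      (∀ s t, tnorm (imp s t) (ψ₂ s) ≤ ψ₂ t) →
      (⨆ t, tnorm (d t) (ψ₁ t ⊓ ψ₂ t)) =
        (⨆ t, tnorm (d t) (ψ₁ t)) ⊓ (⨆ t, tnorm (d t) (ψ₂ t))) ∧
    -- ... whose supremum d 1 is ≥ x ...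
    (x ≤ d 1) ∧
    -- ... and d is the smallest such flat ideal
    (∀ φ : I → I,
      (∀ s t, tnorm (φ t) (imp s t) ≤ φ s) →
      ((⨆ t, φ t) = 1) →
      (∀ ψ₁ ψ₂ : I → I,
        (∀ s t, tnorm (imp s t) (ψ₁ s) ≤ ψ₁ t) →
        (∀ s t, tnorm (imp s t) (ψ₂ s) ≤ ψ₂ t) →
        (⨆ t, tnorm (φ t) (ψ₁ t ⊓ ψ₂ t)) =
          (⨆ t, tnorm (φ t) (ψ₁ t)) ⊓ (⨆ t, tnorm (φ t) (ψ₂ t))) →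
      x ≤ φ 1 → ∀ t, d t ≤ φ t) := by
  -- Part 1 : d is a weight
  have part1 : ∀ s t, tnorm (d t) (imp s t) ≤ d s := by
    intro s t
    by_cases hx : x = 0
    · rw [hd t, hd s, if_pos hx, if_pos hx]
      refine le_imp himp ?_
      rw [comm (imp t 0) (imp s t), ← assoc]
      calc tnorm (tnorm s (imp s t)) (imp t 0)
          ≤ tnorm t (imp t 0) := T_mono2 comm mono (T_imp_le comm unit mono cont himp s t) le_rfl
        _ ≤ 0 := T_imp_le comm unit mono cont himp t 0
    · rw [hd t, hd s, if_neg hx, if_neg hx]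
      by_cases hs : s = 0
      · rw [if_pos hs]; exact le_one'
      · rw [if_neg hs]
        by_cases ht : t = 0
        · subst ht
          rw [if_pos rfl, unit]
          refine le_inf ?_ (imp_mono2 comm unit mono cont himp nonneg')
          rw [himp]
          refine sSup_le fun q hq => ?_
          by_contra hq'
          push_neg at hq'
          have h0x : (0:I) < x := nonneg'.lt_of_ne (Ne.symm hx)
          have h0s : (0:I) < s := nonneg'.lt_of_ne (Ne.symm hs)
          have hle : tnorm s xp ≤ 0 := le_trans (mono s hq'.le) hq
          rw [comm, T_idem_min comm assoc unit mono cont himp hxp_idem s] at hle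
          have hpos : (0:I) < xp ⊓ s := lt_inf_iff.2 ⟨lt_of_lt_of_le h0x hxp_ge, h0s⟩
          exact absurd hle hpos.not_ge
        · rw [if_neg ht]
          refine le_inf ?_ (le_imp himp ?_)
          · calc tnorm (xp ⊓ imp t x) (imp s t) ≤ tnorm xp 1 := T_mono2 comm mono inf_le_left le_one'
              _ = xp := T_one comm unit xp
          · calc tnorm s (tnorm (xp ⊓ imp t x) (imp s t))
                ≤ tnorm s (tnorm (imp t x) (imp s t)) := mono s (T_mono2 comm mono inf_le_right le_rfl)
              _ = tnorm (tnorm s (imp s t)) (imp t x) := by rw [comm (imp t x), ← assoc]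
              _ ≤ tnorm t (imp t x) := T_mono2 comm mono (T_imp_le comm unit mono cont himp s t) le_rfl
              _ ≤ x := T_imp_le comm unit mono cont himp t x
  -- d 0 = 1
  have hd0 : d 0 = 1 := by
    rw [hd 0]
    by_cases hx : x = 0
    · rw [if_pos hx]; exact imp_eq_one comm unit himp le_rfl
    · rw [if_neg hx, if_pos rfl]
  have part2 : (⨆ t, d t) = 1 :=
    le_antisymm le_one' (hd0 ▸ le_iSup d 0)
  -- coweights are monotone
  have cw_mono : ∀ ψ : I → I, (∀ s t, tnorm (imp s t) (ψ s) ≤ ψ t) →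
      ∀ {s t : I}, s ≤ t → ψ s ≤ ψ t := by
    intro ψ hψ s t hst
    have h := hψ s t
    rwa [imp_eq_one comm unit himp hst, unit] at h
  -- tensor formulas
  have formula0 : x = 0 → ∀ ψ : I → I, (∀ s t, tnorm (imp s t) (ψ s) ≤ ψ t) →
      (⨆ t, tnorm (d t) (ψ t)) = ψ 0 := by
    intro hx ψ hψ
    refine le_antisymm (iSup_le fun t => ?_) ?_
    · rw [hd t, if_pos hx]; exact hψ t 0
    · calc ψ 0 = tnorm (d 0) (ψ 0) := by rw [hd0, unit]
        _ ≤ ⨆ t, tnorm (d t) (ψ t) := le_iSup (fun t => tnorm (d t) (ψ t)) 0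
  have formulaP : x ≠ 0 → ∀ ψ : I → I, (∀ s t, tnorm (imp s t) (ψ s) ≤ ψ t) →
      (⨆ t, tnorm (d t) (ψ t)) = ψ 0 ⊔ (xp ⊓ ψ x) := by
    intro hx ψ hψ
    have hdx : d x = xp := by
      rw [hd x, if_neg hx, if_neg hx, imp_eq_one comm unit himp le_rfl]
      exact inf_eq_left.2 le_one'
    refine le_antisymm (iSup_le fun t => ?_) (sup_le ?_ ?_)
    · by_cases ht : t = 0
      · subst ht; rw [hd0, unit]; exact le_sup_left
      · rw [hd t, if_neg hx, if_neg ht]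
        refine le_sup_of_le_right (le_inf ?_ ?_)
        · calc tnorm (xp ⊓ imp t x) (ψ t) ≤ tnorm xp 1 := T_mono2 comm mono inf_le_left le_one'
            _ = xp := T_one comm unit xp
        · exact le_trans (T_mono2 comm mono inf_le_right le_rfl) (hψ t x)
    · calc ψ 0 = tnorm (d 0) (ψ 0) := by rw [hd0, unit]
        _ ≤ ⨆ t, tnorm (d t) (ψ t) := le_iSup (fun t => tnorm (d t) (ψ t)) 0
    · calc xp ⊓ ψ x = tnorm xp (ψ x) := (T_idem_min comm assoc unit mono cont himp hxp_idem (ψ x)).symm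
        _ = tnorm (d x) (ψ x) := by rw [hdx]
        _ ≤ ⨆ t, tnorm (d t) (ψ t) := le_iSup (fun t => tnorm (d t) (ψ t)) x
  have part3 : ∀ ψ₁ ψ₂ : I → I,
      (∀ s t, tnorm (imp s t) (ψ₁ s) ≤ ψ₁ t) →
      (∀ s t, tnorm (imp s t) (ψ₂ s) ≤ ψ₂ t) →
      (⨆ t, tnorm (d t) (ψ₁ t ⊓ ψ₂ t)) =
        (⨆ t, tnorm (d t) (ψ₁ t)) ⊓ (⨆ t, tnorm (d t) (ψ₂ t)) := by
    intro ψ₁ ψ₂ h1 h2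
    have h12 : ∀ s t, tnorm (imp s t) (ψ₁ s ⊓ ψ₂ s) ≤ ψ₁ t ⊓ ψ₂ t := fun s t =>
      le_inf (le_trans (mono _ inf_le_left) (h1 s t)) (le_trans (mono _ inf_le_right) (h2 s t))
    by_cases hx : x = 0
    · calc (⨆ t, tnorm (d t) (ψ₁ t ⊓ ψ₂ t)) = ψ₁ 0 ⊓ ψ₂ 0 :=
            formula0 hx (fun t => ψ₁ t ⊓ ψ₂ t) h12
        _ = (⨆ t, tnorm (d t) (ψ₁ t)) ⊓ (⨆ t, tnorm (d t) (ψ₂ t)) := by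
            rw [formula0 hx ψ₁ h1, formula0 hx ψ₂ h2]
    · calc (⨆ t, tnorm (d t) (ψ₁ t ⊓ ψ₂ t)) = (ψ₁ 0 ⊓ ψ₂ 0) ⊔ (xp ⊓ (ψ₁ x ⊓ ψ₂ x)) :=
            formulaP hx (fun t => ψ₁ t ⊓ ψ₂ t) h12
        _ = (ψ₁ 0 ⊔ (xp ⊓ ψ₁ x)) ⊓ (ψ₂ 0 ⊔ (xp ⊓ ψ₂ x)) :=
            le_antisymm (lat_easy _ _ _ _ _)
              (lat_hard _ _ _ _ _ (cw_mono ψ₁ h1 nonneg') (cw_mono ψ₂ h2 nonneg'))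
        _ = (⨆ t, tnorm (d t) (ψ₁ t)) ⊓ (⨆ t, tnorm (d t) (ψ₂ t)) := by
            rw [formulaP hx ψ₁ h1, formulaP hx ψ₂ h2]
  have part4 : x ≤ d 1 := by
    by_cases hx : x = 0
    · rw [hx]; exact nonneg'
    · have h10 : (1:I) ≠ 0 := fun h => by
        have := congrArg Subtype.val h
        norm_num at this
      rw [hd 1, if_neg hx, if_neg h10]
      exact le_inf hxp_ge (le_imp_self comm unit mono himp 1 x)
  refine ⟨part1, part2, part3, part4, ?_⟩
  -- Part 5 : minimality
  intro φ hW hsup hflat h1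
  have hφ1le : ∀ s, φ 1 ≤ φ s := fun s => by
    have h := hW s 1
    rwa [imp_eq_one comm unit himp le_one', T_one comm unit] at h
  have hφx : ∀ s, x ≤ φ s := fun s => le_trans h1 (hφ1le s)
  have hφ0 : φ 0 = 1 := by
    refine le_antisymm le_one' ?_
    rw [← hsup]
    refine iSup_le fun t => ?_
    have h := hW 0 t
    rwa [imp_eq_one comm unit himp nonneg', T_one comm unit] at h
  intro t
  by_cases hx : x = 0
  · rw [hd t, if_pos hx]
    have h := hW t 0
    rwa [hφ0, unit] at h
  · -- main step : xp ≤ φ x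
    have hTconst : ∀ c : I, (⨆ s, tnorm (φ s) c) = c := by
      intro c
      calc (⨆ s, tnorm (φ s) c) = ⨆ s, tnorm c (φ s) := iSup_congr fun s => comm _ _
        _ = tnorm c (⨆ s, φ s) := (T_iSup comm unit mono cont c φ).symm
        _ = c := by rw [hsup, T_one comm unit]
    have hσ : x ≤ ⨆ s, tnorm (φ s) s := by
      calc x ≤ φ 1 := h1
        _ = tnorm (φ 1) 1 := (T_one comm unit (φ 1)).symm
        _ ≤ ⨆ s, tnorm (φ s) s := le_iSup (fun s => tnorm (φ s) s) 1
    have hg : (⨆ s, tnorm (φ s) (x ⊓ s)) = x := by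
      have hid : ∀ s t', tnorm (imp s t') ((fun y => y) s) ≤ (fun y => y) t' := fun s t' => by
        rw [comm]; exact T_imp_le comm unit mono cont himp s t'
      have hcx : ∀ s t', tnorm (imp s t') ((fun _ => x) s) ≤ (fun _ => x) t' := fun s t' =>
        T_le_right comm unit mono _ _
      have h := hflat (fun _ => x) (fun y => y) hcx hid
      have h' : (⨆ s, tnorm (φ s) (x ⊓ s)) = (⨆ s, tnorm (φ s) x) ⊓ (⨆ s, tnorm (φ s) s) := h
      rw [hTconst x] at h'
      rw [h']
      exact inf_eq_left.2 hσ
    set T := ⨆ s, tnorm (φ s) (imp x (x ⊓ s)) with hT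
    have hTa : T ≤ φ x :=
      iSup_le fun s => le_trans (mono _ (imp_mono2 comm unit mono cont himp inf_le_right)) (hW x s)
    have hxT : tnorm x T = x := by
      rw [hT, T_iSup comm unit mono cont]
      calc (⨆ s, tnorm x (tnorm (φ s) (imp x (x ⊓ s))))
          = ⨆ s, tnorm (φ s) (x ⊓ s) := iSup_congr fun s => by
            rw [comm x (tnorm (φ s) (imp x (x ⊓ s))), assoc, comm (imp x (x ⊓ s)) x,
              T_imp_min comm assoc unit mono cont himp x (x ⊓ s), ← inf_assoc, inf_idem]
        _ = x := hg
    obtain ⟨e, hee, hxe, heT⟩ : ∃ e : I, tnorm e e = e ∧ x ≤ e ∧ e ≤ T := by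
      set u : ℕ → I := fun n => (tnorm T)^[n] T with hu
      have husucc : ∀ n, u (n+1) = tnorm T (u n) := fun n =>
        Function.iterate_succ_apply' (tnorm T) n T
      have hxu : ∀ n, tnorm x (u n) = x := by
        intro n
        induction n with
        | zero => exact hxT
        | succ n ih => rw [husucc, ← assoc, hxT, ih]
      have hmul : ∀ m n, tnorm (u m) (u n) = u (m + n + 1) := by
        intro m n
        induction n with
        | zero => rw [comm]; exact (husucc m).symm
        | succ n ih =>
            rw [husucc n, ← assoc, comm (u m) T, assoc, ih, ← husucc (m + n + 1)]
            congr 1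
      refine ⟨⨅ n, u n, ?_, ?_, iInf_le u 0⟩
      · refine le_antisymm (T_le_left comm unit mono _ _) ?_
        have hcalc : tnorm (⨅ n, u n) (⨅ n, u n) = ⨅ n, ⨅ m, u (n + m + 1) := by
          rw [T_iInf mono cont]
          exact iInf_congr fun n => by
            rw [comm, T_iInf mono cont]
            exact iInf_congr fun m => hmul n m
        rw [hcalc]
        exact le_iInf fun n => le_iInf fun m => iInf_le u _
      · exact le_iInf fun n => by
          calc x = tnorm x (u n) := (hxu n).symm
            _ ≤ u n := T_le_right comm unit mono _ _
    have hxpφ : xp ≤ φ x := le_trans (hxp_least e hee hxe) (le_trans heT hTa)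
    rw [hd t, if_neg hx]
    by_cases ht : t = 0
    · rw [if_pos ht, ht, hφ0]
    · rw [if_neg ht]
      calc xp ⊓ imp t x = tnorm xp (imp t x) :=
            (T_idem_min comm assoc unit mono cont himp hxp_idem (imp t x)).symm
        _ ≤ tnorm (φ x) (imp t x) := T_mono2 comm mono hxpφ le_rfl
        _ ≤ φ t := hW t x
end

section
/- Let & be a continuous t-norm and Q = ([0,1],&). The Sierpiński Q-topological space 𝕊 (the coarsest Q-topology on [0,1] containing the identity map) coincides with the Scott Q-topology of its specialization Q-order if and only if & is the Gödel t-norm (minimum). -/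
set_option linter.unusedSectionVars false
set_option maxHeartbeats 1000000


open unitInterval

/-- `τ` is a `Q`-topology on `[0,1]` for the quantale `([0,1], &)`. -/
def IsQTopology (tnorm : I → I → I) (τ : Set (I → I)) : Prop :=
  ((fun _ : I => (1 : I)) ∈ τ) ∧
  (∀ lam mu, lam ∈ τ → mu ∈ τ → lam ⊓ mu ∈ τ) ∧
  (∀ S : Set (I → I), S ⊆ τ → sSup S ∈ τ) ∧
  (∀ lam ∈ τ, ∀ r : I, (fun x => tnorm (lam x) r) ∈ τ)

/-- The Sierpiński `Q`-topology: the coarsest `Q`-topology on `[0,1]`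
containing the identity map. -/
def sierpinski (tnorm : I → I → I) : Set (I → I) :=
  ⋂₀ {τ : Set (I → I) | IsQTopology tnorm τ ∧ (fun x : I => x) ∈ τ}

/-- `φ` is a flat ideal of `([0,1], ord)`. -/
def IsFlatIdeal (tnorm : I → I → I) (ord : I → I → I) (φ : I → I) : Prop :=
  (∀ x y, tnorm (φ y) (ord x y) ≤ φ x) ∧
  ((1 : I) ≤ ⨆ x, φ x) ∧
  (∀ ψ₁ ψ₂ : I → I,
    (∀ x y, tnorm (ord x y) (ψ₁ x) ≤ ψ₁ y) →
    (∀ x y, tnorm (ord x y) (ψ₂ x) ≤ ψ₂ y) →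
    (⨆ x, tnorm (φ x) (ψ₁ x ⊓ ψ₂ x)) =
      (⨆ x, tnorm (φ x) (ψ₁ x)) ⊓ (⨆ x, tnorm (φ x) (ψ₂ x)))

/-- `s` is a supremum of the weight `φ` in `([0,1], ord)`. -/
def IsWeightSup (imp : I → I → I) (ord : I → I → I) (φ : I → I) (s : I) : Prop :=
  ∀ y, ord s y = ⨅ x, imp (φ x) (ord x y)

/-- The Scott `Q`-topology of `([0,1], ord)`. -/
def scottTopology (tnorm : I → I → I) (imp : I → I → I) (ord : I → I → I) :
    Set (I → I) :=
  {ψ | (∀ x y, tnorm (ord x y) (ψ x) ≤ ψ y) ∧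
    ∀ φ, IsFlatIdeal tnorm ord φ → ∀ s, IsWeightSup imp ord φ s →
      ψ s ≤ ⨆ x, tnorm (φ x) (ψ x)}


structure TN (tnorm : I → I → I) : Prop where
  comm : ∀ x y, tnorm x y = tnorm y x
  assoc : ∀ x y z, tnorm (tnorm x y) z = tnorm x (tnorm y z)
  unit : ∀ x, tnorm 1 x = x
  mono : ∀ x, Monotone (tnorm x)
  cont : Continuous (fun q : I × I => tnorm q.1 q.2)

namespace TN
variable {tnorm : I → I → I} (h : TN tnorm)
include h

lemma unit' (x : I) : tnorm x 1 = x := by rw [h.comm]; exact h.unit x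

lemma monoL (r : I) : Monotone (fun x => tnorm x r) := by
  intro a b hab; simp only; rw [h.comm a r, h.comm b r]; exact h.mono r hab

lemma mono2 {a b c d : I} (h1 : a ≤ b) (h2 : c ≤ d) : tnorm a c ≤ tnorm b d :=
  le_trans (h.monoL c h1) (h.mono b h2)

lemma le_left (x y : I) : tnorm x y ≤ x := by
  have := h.mono x (show y ≤ 1 from le_one'); simpa [h.unit' x] using this

lemma le_right (x y : I) : tnorm x y ≤ y := by rw [h.comm]; exact h.le_left y x

lemma zero_right (x : I) : tnorm x 0 = 0 := le_antisymm (h.le_right x 0) bot_le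

lemma zero_left (x : I) : tnorm 0 x = 0 := by rw [h.comm]; exact h.zero_right x

lemma contR (r : I) : Continuous (fun x => tnorm r x) :=
  h.cont.comp (continuous_const.prodMk continuous_id)

lemma contL (r : I) : Continuous (fun x => tnorm x r) :=
  h.cont.comp (continuous_id.prodMk continuous_const)

lemma map_sSup (r : I) (S : Set I) : tnorm r (sSup S) = sSup ((fun x => tnorm r x) '' S) :=
  Monotone.map_sSup_of_continuousAt ((h.contR r).continuousAt) (h.mono r) (h.zero_right r)

lemma map_iSup {ι : Sort*} (r : I) (f : ι → I) : tnorm r (⨆ i, f i) = ⨆ i, tnorm r (f i) := by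
  rw [iSup, h.map_sSup r, ← Set.range_comp]; rfl

lemma map_iSupL {ι : Sort*} (r : I) (f : ι → I) : tnorm (⨆ i, f i) r = ⨆ i, tnorm (f i) r := by
  rw [h.comm, h.map_iSup]; simp [h.comm r]

/-- an idempotent acts as min -/
lemma idem_min {e : I} (he : tnorm e e = e) (x : I) : tnorm e x = e ⊓ x := by
  rcases le_total x e with hx | hx
  · have hsurj := intermediate_value_Icc (bot_le : (0:I) ≤ 1)
      ((h.contR e).continuousOn (s := Set.Icc 0 1))
    have hx' : x ∈ Set.Icc (tnorm e 0) (tnorm e 1) := by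
      rw [h.zero_right, h.unit']; exact ⟨bot_le, hx⟩
    obtain ⟨z, -, hz⟩ := hsurj hx'
    simp only [] at hz
    have : tnorm e x = x := by
      calc tnorm e x = tnorm e (tnorm e z) := by rw [hz]
        _ = tnorm (tnorm e e) z := (h.assoc e e z).symm
        _ = x := by rw [he, hz]
    rw [this, inf_eq_right.2 hx]
  · have h1 : tnorm e x ≤ e := h.le_left e x
    have h2 : e ≤ tnorm e x := by
      calc e = tnorm e e := he.symm
        _ ≤ tnorm e x := h.mono e hx
    rw [le_antisymm h1 h2, inf_eq_left.2 hx]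

/-- key structural lemma: `tnorm c ·` has no plateaus at levels strictly between
neighbouring idempotents -/
lemma no_plateau {c q1 q2 v cm cp : I}
    (hmax : ∀ e, tnorm e e = e → e ≤ c → e ≤ cm)
    (hmin : ∀ e, tnorm e e = e → c ≤ e → cp ≤ e)
    (hq1 : tnorm c q1 = v) (hq2 : tnorm c q2 = v) (hlt : q1 < q2) (hq2cp : q2 ≤ cp)
    (hv : cm < v) : False := by
  -- find r with tnorm q2 r = q1
  have hsurj := intermediate_value_Icc (bot_le : (0:I) ≤ 1)
    ((h.contR q2).continuousOn (s := Set.Icc 0 1))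
  have hx' : q1 ∈ Set.Icc (tnorm q2 0) (tnorm q2 1) := by
    rw [h.zero_right, h.unit']; exact ⟨bot_le, le_of_lt hlt⟩
  obtain ⟨r, -, hr⟩ := hsurj hx'
  simp only [] at hr
  -- powers of r
  set a : ℕ → I := fun n => (fun t => tnorm t r)^[n] 1 with ha_def
  have ha0 : a 0 = 1 := rfl
  have haS : ∀ n, a (n + 1) = tnorm (a n) r := by
    intro n; rw [ha_def]; simp only []
    rw [Function.iterate_succ_apply']
  have hanti : Antitone a := by
    apply antitone_nat_of_succ_le
    intro n; rw [haS]; exact h.le_left _ _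
  have hadd : ∀ m n, tnorm (a m) (a n) = a (m + n) := by
    intro m n
    induction n with
    | zero => rw [ha0, h.unit']; congr 1
    | succ n ih =>
        rw [haS, ← h.assoc, ih, ← haS]
        congr 1
  set e : I := ⨅ n, a n with he_def
  have hten : Filter.Tendsto a Filter.atTop (nhds e) := tendsto_atTop_iInf hanti
  have h2n : Filter.Tendsto (fun n : ℕ => 2 * n) Filter.atTop Filter.atTop :=
    Filter.tendsto_atTop_atTop_of_monotone (fun x y hxy => by omega) (fun b => ⟨b, by omega⟩)
  have hee : tnorm e e = e := by
    have t1 : Filter.Tendsto (fun n => tnorm (a n) (a n)) Filter.atTop (nhds (tnorm e e)) :=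
      (h.cont.tendsto (e, e)).comp (hten.prodMk_nhds hten)
    have t2 : Filter.Tendsto (fun n => tnorm (a n) (a n)) Filter.atTop (nhds e) := by
      have : (fun n => tnorm (a n) (a n)) = fun n => a (2 * n) := by
        funext n; rw [hadd]; ring_nf
      rw [this]
      exact hten.comp h2n
    exact tendsto_nhds_unique t1 t2
  -- v is fixed by r and hence by e
  have hvr : tnorm v r = v := by
    conv_lhs => rw [← hq2]
    rw [h.assoc, hr, hq1]
  have hvn : ∀ n, tnorm v (a n) = v := by
    intro n
    induction n with
    | zero => rw [ha0, h.unit']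
    | succ n ih => rw [haS, ← h.assoc, ih, hvr]
  have hve : tnorm v e = v := by
    have t1 : Filter.Tendsto (fun n => tnorm v (a n)) Filter.atTop (nhds (tnorm v e)) :=
      ((h.contR v).tendsto e).comp hten
    have t2 : Filter.Tendsto (fun n => tnorm v (a n)) Filter.atTop (nhds v) := by
      simp only [hvn]; exact tendsto_const_nhds
    exact tendsto_nhds_unique t1 t2
  have hvle : v ≤ e := hve ▸ h.le_right v e
  have her : e ≤ r := by
    have : e ≤ a 1 := iInf_le a 1
    rwa [haS, ha0, h.unit] at this
  rcases le_total e c with hec | hce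
  · exact absurd (le_trans hvle (hmax e hee hec)) (not_le.2 hv)
  · have hcpe : cp ≤ e := hmin e hee hce
    have : q2 ≤ q1 := by
      calc q2 = e ⊓ q2 := by rw [inf_eq_right.2 (le_trans hq2cp hcpe)]
        _ = tnorm e q2 := (h.idem_min hee q2).symm
        _ = tnorm q2 e := h.comm e q2
        _ ≤ tnorm q2 r := h.mono q2 her
        _ = q1 := hr
    exact absurd this (not_le.2 hlt)

section Imp
variable {imp : I → I → I} (himp : ∀ x z, imp x z = sSup {q | tnorm x q ≤ z})
include himp

lemma le_imp {x y q : I} (hq : tnorm x q ≤ y) : q ≤ imp x y := by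
  rw [himp]; exact le_sSup hq

lemma tnorm_imp_le (x y : I) : tnorm x (imp x y) ≤ y := by
  rw [himp, h.map_sSup]
  apply sSup_le
  rintro z ⟨q, hq, rfl⟩
  exact hq

lemma imp_iff {x y q : I} : q ≤ imp x y ↔ tnorm x q ≤ y :=
  ⟨fun hq => le_trans (h.mono x hq) (h.tnorm_imp_le himp x y), h.le_imp himp⟩

lemma imp_eq_one {x y : I} (hxy : x ≤ y) : imp x y = 1 :=
  le_antisymm le_one' (h.le_imp himp (by rw [h.unit']; exact hxy))

lemma le_of_imp_eq_one {x y : I} (hxy : (1:I) ≤ imp x y) : x ≤ y := by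
  have := (h.imp_iff himp).1 hxy
  rwa [h.unit'] at this

lemma self_le_imp (c x : I) : x ≤ imp c x := h.le_imp himp (h.le_right c x)

lemma imp_mono {x y y' : I} (hy : y ≤ y') : imp x y ≤ imp x y' :=
  h.le_imp himp (le_trans (h.tnorm_imp_le himp x y) hy)

/-- the value of `tnorm c (imp c x)` -/
lemma tnorm_imp (c x : I) : tnorm c (imp c x) = x ⊓ c := by
  rcases le_total c x with hcx | hxc
  · rw [h.imp_eq_one himp hcx, h.unit', inf_eq_right.2 hcx]
  · refine le_antisymm (le_inf (h.tnorm_imp_le himp c x) (h.le_left c _)) ?_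
    rw [inf_eq_left.2 hxc]
    have hsurj := intermediate_value_Icc (bot_le : (0:I) ≤ 1)
      ((h.contR c).continuousOn (s := Set.Icc 0 1))
    have hx' : x ∈ Set.Icc (tnorm c 0) (tnorm c 1) := by
      rw [h.zero_right, h.unit']; exact ⟨bot_le, hxc⟩
    obtain ⟨z, -, hz⟩ := hsurj hx'
    simp only [] at hz
    calc x = tnorm c z := hz.symm
      _ ≤ tnorm c (imp c x) := h.mono c (h.le_imp himp (le_of_eq hz))

end Imp
end TN

section Topo

lemma id_mem_sierpinski (tnorm : I → I → I) : (fun x : I => x) ∈ sierpinski tnorm :=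
  fun _ hτ => hτ.2

lemma sierpinski_subset {tnorm : I → I → I} {τ : Set (I → I)}
    (hτ : IsQTopology tnorm τ) (hid : (fun x : I => x) ∈ τ) : sierpinski tnorm ⊆ τ :=
  fun _ hlam => hlam τ ⟨hτ, hid⟩

end Topo

namespace TN
variable {tnorm : I → I → I} (h : TN tnorm)
include h

lemma qtop_P : IsQTopology tnorm {mu : I → I | ∀ x, mu x ≤ x ⊔ mu 0} := by
  refine ⟨?_, ?_, ?_, ?_⟩
  · intro x; exact le_sup_right
  · intro lam mu hl hm x
    calc (lam ⊓ mu) x = lam x ⊓ mu x := rfl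
      _ ≤ (x ⊔ lam 0) ⊓ (x ⊔ mu 0) := inf_le_inf (hl x) (hm x)
      _ = x ⊔ (lam ⊓ mu) 0 := (sup_inf_left x (lam 0) (mu 0)).symm
  · intro S hS x
    rw [sSup_apply]
    apply iSup_le; intro f
    calc (f : I → I) x ≤ x ⊔ (f : I → I) 0 := hS f.2 x
      _ ≤ x ⊔ sSup S 0 := by
          apply sup_le_sup_left
          rw [sSup_apply]
          exact le_iSup (fun g : S => (g : I → I) 0) f
  · intro lam hl r x
    calc tnorm (lam x) r ≤ tnorm (x ⊔ lam 0) r := h.monoL r (hl x)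
      _ = tnorm x r ⊔ tnorm (lam 0) r := (h.monoL r).map_max
      _ ≤ x ⊔ tnorm (lam 0) r := sup_le_sup_right (h.le_left x r) _

lemma sierp_P {lam : I → I} (hlam : lam ∈ sierpinski tnorm) (x : I) : lam x ≤ x ⊔ lam 0 :=
  sierpinski_subset h.qtop_P (fun x => le_sup_left) hlam x

section Imp2
variable {imp : I → I → I} (himp : ∀ x z, imp x z = sSup {q | tnorm x q ≤ z})
include himp

lemma qtop_coweights :
    IsQTopology tnorm {lam : I → I | ∀ x y, tnorm (imp x y) (lam x) ≤ lam y} := by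
  refine ⟨?_, ?_, ?_, ?_⟩
  · intro x y; exact h.le_right _ _
  · intro lam mu hl hm x y
    calc tnorm (imp x y) ((lam ⊓ mu) x) = tnorm (imp x y) (lam x) ⊓ tnorm (imp x y) (mu x) :=
          (h.mono _).map_min
      _ ≤ lam y ⊓ mu y := inf_le_inf (hl x y) (hm x y)
  · intro S hS x y
    calc tnorm (imp x y) (sSup S x) = ⨆ f : S, tnorm (imp x y) ((f : I → I) x) := by
          rw [sSup_apply, h.map_iSup]
      _ ≤ sSup S y := by
          apply iSup_le; intro f
          rw [sSup_apply]
          exact le_trans (hS f.2 x y) (le_iSup (fun g : S => (g : I → I) y) f)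
  · intro lam hl r x y
    calc tnorm (imp x y) (tnorm (lam x) r) = tnorm (tnorm (imp x y) (lam x)) r :=
          (h.assoc _ _ _).symm
      _ ≤ tnorm (lam y) r := h.monoL r (hl x y)

lemma sierp_coweight {lam : I → I} (hlam : lam ∈ sierpinski tnorm) (x y : I) :
    tnorm (imp x y) (lam x) ≤ lam y := by
  have hid : (fun x : I => x) ∈ {lam : I → I | ∀ x y, tnorm (imp x y) (lam x) ≤ lam y} := by
    intro x y
    rw [h.comm]
    exact h.tnorm_imp_le himp x y
  exact sierpinski_subset (h.qtop_coweights himp) hid hlam x y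

lemma omega_eq {Ω : I → I → I}
    (hΩ : ∀ x y, Ω x y = ⨅ lam ∈ sierpinski tnorm, imp (lam x) (lam y)) (x y : I) :
    Ω x y = imp x y := by
  rw [hΩ]
  apply le_antisymm
  · exact iInf₂_le (fun x : I => x) (id_mem_sierpinski tnorm)
  · apply le_iInf₂; intro lam hlam
    apply h.le_imp himp
    rw [h.comm]
    exact h.sierp_coweight himp hlam x y

end Imp2
end TN
namespace TN
variable {tnorm : I → I → I} (h : TN tnorm)
include h

lemma forward {imp : I → I → I} (himp : ∀ x z, imp x z = sSup {q | tnorm x q ≤ z})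
    {Ω : I → I → I} (hΩ : ∀ x y, Ω x y = ⨅ lam ∈ sierpinski tnorm, imp (lam x) (lam y))
    (heq : sierpinski tnorm = scottTopology tnorm imp Ω) :
    ∀ a b : I, tnorm a b = a ⊓ b := by
  have hΩeq : ∀ x y, Ω x y = imp x y := h.omega_eq himp hΩ
  have idem : ∀ c, tnorm c c = c := by
    intro c
    by_contra hc
    have hcc : tnorm c c < c := lt_of_le_of_ne (h.le_left c c) hc
    -- neighbouring idempotents
    have hdiag : Continuous (fun e : I => tnorm e e) :=
      h.cont.comp (continuous_id.prodMk continuous_id)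
    have hclosed : IsClosed {e : I | tnorm e e = e} := isClosed_eq hdiag continuous_id
    set cm : I := sSup {e | tnorm e e = e ∧ e ≤ c} with hcm_def
    set cp : I := sInf {e | tnorm e e = e ∧ c ≤ e} with hcp_def
    have hcm_mem : cm ∈ {e : I | tnorm e e = e ∧ e ≤ c} := by
      apply IsClosed.sSup_mem
      · exact ⟨0, by simp [h.zero_right], bot_le⟩
      · exact hclosed.inter isClosed_Iic
    have hcp_mem : cp ∈ {e : I | tnorm e e = e ∧ c ≤ e} := by
      apply IsClosed.sInf_mem
      · exact ⟨1, h.unit 1, le_one'⟩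
      · exact hclosed.inter isClosed_Ici
    obtain ⟨hcm_idem, hcm_le⟩ := hcm_mem
    obtain ⟨hcp_idem, hcp_ge⟩ := hcp_mem
    have hcm_lt : cm < c := lt_of_le_of_ne hcm_le (fun he => hc (he ▸ hcm_idem))
    have hcp_gt : c < cp := lt_of_le_of_ne hcp_ge (fun he => hc (he.symm ▸ hcp_idem))
    have hmax : ∀ e, tnorm e e = e → e ≤ c → e ≤ cm := fun e h1 h2 => le_sSup ⟨h1, h2⟩
    have hmin : ∀ e, tnorm e e = e → c ≤ e → cp ≤ e := fun e h1 h2 => sInf_le ⟨h1, h2⟩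
    set b : I := imp c cm with hb_def
    set a : I := cp with ha_def
    have htca : tnorm c a = c := by
      rw [h.comm, h.idem_min hcp_idem, inf_eq_right.2 (le_of_lt hcp_gt)]
    have htcb : tnorm c b ≤ cm := h.tnorm_imp_le himp c cm
    have hba : b < a := by
      rcases lt_or_ge b a with hlt | hle
      · exact hlt
      · exfalso
        have : c ≤ tnorm c b := by
          calc c = tnorm c a := htca.symm
            _ ≤ tnorm c b := h.mono c hle
        exact absurd (le_trans this htcb) (not_le.2 hcm_lt)
    set lam : I → I := fun x => (b ⊔ imp c x) ⊓ a with hlam_def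
    -- lam is a coweight
    have hkey : ∀ x y, tnorm (imp x y) (imp c x) ≤ imp c y := by
      intro x y
      apply h.le_imp himp
      calc tnorm c (tnorm (imp x y) (imp c x))
          = tnorm (imp x y) (tnorm c (imp c x)) := by
            rw [← h.assoc, h.comm c (imp x y), h.assoc]
        _ ≤ tnorm (imp x y) x := h.mono _ (h.tnorm_imp_le himp c x)
        _ = tnorm x (imp x y) := h.comm _ _
        _ ≤ y := h.tnorm_imp_le himp x y
    have hcow : ∀ x y, tnorm (Ω x y) (lam x) ≤ lam y := by
      intro x y
      rw [hΩeq]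
      calc tnorm (imp x y) ((b ⊔ imp c x) ⊓ a)
          = tnorm (imp x y) (b ⊔ imp c x) ⊓ tnorm (imp x y) a := (h.mono _).map_min
        _ ≤ tnorm (imp x y) (b ⊔ imp c x) ⊓ a := inf_le_inf_left _ (h.le_right _ _)
        _ = (tnorm (imp x y) b ⊔ tnorm (imp x y) (imp c x)) ⊓ a := by
            rw [(h.mono (imp x y)).map_max]
        _ ≤ (b ⊔ imp c y) ⊓ a := by
            apply inf_le_inf_right
            exact sup_le_sup (h.le_right _ _) (hkey x y)
    -- lam is Scott open
    have hscott : lam ∈ scottTopology tnorm imp Ω := by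
      refine ⟨hcow, ?_⟩
      intro φ hflat s hws
      obtain ⟨hweight, hone, hdist⟩ := hflat
      set R : I := ⨆ x, tnorm (φ x) (lam x) with hR_def
      set m : I := ⨆ x, tnorm (φ x) x with hm_def
      have hsup1 : (⨆ x, φ x) = 1 := le_antisymm (iSup_le fun x => le_one') hone
      have hconstk : ∀ k : I, (⨆ x, tnorm (φ x) k) = k := by
        intro k
        rw [← h.map_iSupL k φ, hsup1, h.unit]
      have hid_cow : ∀ x y : I, tnorm (Ω x y) ((fun t : I => t) x) ≤ (fun t : I => t) y := by
        intro x y; rw [hΩeq, h.comm]; exact h.tnorm_imp_le himp x y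
      have hconst_cow : ∀ k : I, ∀ x y : I,
          tnorm (Ω x y) ((fun _ : I => k) x) ≤ (fun _ : I => k) y := by
        intro k x y; exact h.le_right _ _
      have hflat_k : ∀ k : I, (⨆ x, tnorm (φ x) (x ⊓ k)) = m ⊓ k := by
        intro k
        have := hdist (fun t => t) (fun _ => k) hid_cow (hconst_cow k)
        simpa [hconstk k] using this
      have hws' : ∀ y, imp s y = ⨅ x, imp (φ x) (imp x y) := by
        intro y
        have := hws y
        simpa [hΩeq] using this
      have hsm : s ≤ m := by
        apply h.le_of_imp_eq_one himp
        rw [hws' m]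
        apply le_iInf; intro x
        have hx : φ x ≤ imp x m := h.le_imp himp
          (by rw [h.comm]; exact le_iSup (fun t => tnorm (φ t) t) x)
        rw [h.imp_eq_one himp hx]
      have hms : m ≤ s := by
        apply iSup_le; intro x
        have h1 : (1:I) ≤ imp (φ x) (imp x s) := by
          rw [← h.imp_eq_one himp (le_refl s), hws' s]
          exact iInf_le _ x
        have h2 : φ x ≤ imp x s := h.le_of_imp_eq_one himp h1
        calc tnorm (φ x) x = tnorm x (φ x) := h.comm _ _
          _ ≤ tnorm x (imp x s) := h.mono x h2
          _ ≤ s := h.tnorm_imp_le himp x s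
      have hmeq : m = s := le_antisymm hms hsm
      have hlam_b : ∀ x, b ≤ lam x := fun x => le_inf (le_sup_left) (le_of_lt hba)
      have hlam_xa : ∀ x, x ⊓ a ≤ lam x := by
        intro x
        exact le_inf (le_trans inf_le_left (le_trans (h.self_le_imp himp c x) le_sup_right))
          inf_le_right
      have hRb : b ≤ R := by
        rw [← hconstk b]
        exact iSup_mono fun x => h.mono _ (hlam_b x)
      have hRsa : s ⊓ a ≤ R := by
        calc s ⊓ a = m ⊓ a := by rw [hmeq]
          _ = ⨆ x, tnorm (φ x) (x ⊓ a) := (hflat_k a).symm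
          _ ≤ R := iSup_mono fun x => h.mono _ (hlam_xa x)
      have htclam : ∀ x, x ⊓ c ≤ tnorm c (lam x) := by
        intro x
        calc x ⊓ c = (x ⊓ c) ⊓ c := by rw [inf_assoc, inf_idem]
          _ = tnorm c (imp c x) ⊓ tnorm c a := by rw [h.tnorm_imp himp, htca]
          _ = tnorm c (imp c x ⊓ a) := ((h.mono c).map_min).symm
          _ ≤ tnorm c (lam x) := h.mono c (inf_le_inf_right a le_sup_right)
      have htcR : s ⊓ c ≤ tnorm c R := by
        rw [hR_def, h.map_iSup]
        calc s ⊓ c = m ⊓ c := by rw [hmeq]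
          _ = ⨆ x, tnorm (φ x) (x ⊓ c) := (hflat_k c).symm
          _ ≤ ⨆ x, tnorm c (tnorm (φ x) (lam x)) := by
              apply iSup_mono; intro x
              calc tnorm (φ x) (x ⊓ c) ≤ tnorm (φ x) (tnorm c (lam x)) :=
                    h.mono _ (htclam x)
                _ = tnorm c (tnorm (φ x) (lam x)) := by
                    rw [← h.assoc, h.comm (φ x) c, h.assoc]
      -- final case analysis
      rcases le_total a s with has | hsa
      · calc lam s ≤ a := inf_le_right
          _ = s ⊓ a := (inf_eq_right.2 has).symm
          _ ≤ R := hRsa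
      · rcases le_or_gt s cm with hscm | hcms'
        · have : imp c s ≤ b := h.imp_mono himp hscm
          calc lam s ≤ b ⊔ imp c s := inf_le_left
            _ ≤ b := sup_le le_rfl this
            _ ≤ R := hRb
        · rcases le_or_gt c s with hcs | hsc
          · -- c ≤ s < a (really s ≤ a): show a ≤ R
            have haR : a ≤ R := by
              by_contra haR
              have hRa' : R < a := lt_of_not_ge haR
              have h1 : tnorm c R = c := by
                apply le_antisymm (h.le_left c R)
                calc c = s ⊓ c := (inf_eq_right.2 hcs).symm
                  _ ≤ tnorm c R := htcR
              exact h.no_plateau hmax hmin h1 htca hRa' le_rfl hcm_lt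
            calc lam s ≤ a := inf_le_right
              _ ≤ R := haR
          · -- cm < s < c
            set q2 : I := imp c s with hq2_def
            have htcq2 : tnorm c q2 = s := by
              rw [h.tnorm_imp himp, inf_eq_left.2 (le_of_lt hsc)]
            have hq2cp : q2 ≤ cp := by
              by_contra hq
              have : cp ≤ q2 := le_of_lt (lt_of_not_ge hq)
              have : c ≤ s := by
                calc c = tnorm c cp := htca.symm
                  _ ≤ tnorm c q2 := h.mono c this
                  _ = s := htcq2
              exact absurd this (not_le.2 hsc)
            have hq2R : q2 ≤ R := by
              by_contra hq
              have hRq2 : R < q2 := lt_of_not_ge hq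
              have h1 : tnorm c R = s := by
                apply le_antisymm
                · calc tnorm c R ≤ tnorm c q2 := h.mono c (le_of_lt hRq2)
                    _ = s := htcq2
                · calc s = s ⊓ c := (inf_eq_left.2 (le_of_lt hsc)).symm
                    _ ≤ tnorm c R := htcR
              exact h.no_plateau hmax hmin h1 htcq2 hRq2 hq2cp hcms'
            calc lam s ≤ b ⊔ q2 := inf_le_left
              _ ≤ R := sup_le hRb hq2R
    -- lam is not in the Sierpinski topology
    have hmem : lam ∈ sierpinski tnorm := heq ▸ hscott
    have hP := h.sierp_P hmem c
    have hlamc : lam c = a := by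
      rw [hlam_def]
      simp only []
      rw [h.imp_eq_one himp (le_refl c), sup_eq_right.2 le_one', inf_eq_right.2 le_one']
    have hlam0 : lam 0 = b := by
      rw [hlam_def]
      simp only []
      rw [sup_eq_left.2 (h.imp_mono himp bot_le : imp c 0 ≤ b), inf_eq_left.2 (le_of_lt hba)]
    rw [hlamc, hlam0] at hP
    have : a ≤ c ⊔ b := hP
    have hlt : c ⊔ b < a := sup_lt_iff.2 ⟨hcp_gt, hba⟩
    exact absurd this (not_le.2 hlt)
  -- idempotency implies min
  intro x y
  rcases le_total x y with hxy | hyx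
  · apply le_antisymm
    · exact le_inf (h.le_left x y) (h.le_right x y)
    · calc x ⊓ y = x := inf_eq_left.2 hxy
        _ = tnorm x x := (idem x).symm
        _ ≤ tnorm x y := h.mono x hxy
  · apply le_antisymm
    · exact le_inf (h.le_left x y) (h.le_right x y)
    · calc x ⊓ y = y := inf_eq_right.2 hyx
        _ = tnorm y y := (idem y).symm
        _ ≤ tnorm x y := h.monoL y hyx

end TN
namespace TN
variable {tnorm : I → I → I} (h : TN tnorm)
include h

variable {imp : I → I → I} (himp : ∀ x z, imp x z = sSup {q | tnorm x q ≤ z})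
variable {Ω : I → I → I} (hΩ : ∀ x y, Ω x y = ⨅ lam ∈ sierpinski tnorm, imp (lam x) (lam y))
include himp hΩ

lemma weightSup_le {φ : I → I} {s : I} (hws : IsWeightSup imp Ω φ s) :
    s ≤ ⨆ x, tnorm (φ x) x := by
  have hΩeq : ∀ x y, Ω x y = imp x y := h.omega_eq himp hΩ
  have hws' : ∀ y, imp s y = ⨅ x, imp (φ x) (imp x y) := by
    intro y; have := hws y; simpa [hΩeq] using this
  apply h.le_of_imp_eq_one himp
  rw [hws' _]
  apply le_iInf; intro x
  have hx : φ x ≤ imp x (⨆ x, tnorm (φ x) x) := h.le_imp himp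
    (by rw [h.comm]; exact le_iSup (fun t => tnorm (φ t) t) x)
  rw [h.imp_eq_one himp hx]

lemma scott_qtop : IsQTopology tnorm (scottTopology tnorm imp Ω) := by
  refine ⟨⟨?_, ?_⟩, ?_, ?_, ?_⟩
  · intro x y; exact h.le_right _ _
  · intro φ hflat s hws
    calc (1:I) ≤ ⨆ x, φ x := hflat.2.1
      _ = ⨆ x, tnorm (φ x) 1 := by simp [h.unit']
  · rintro lam mu ⟨hl1, hl2⟩ ⟨hm1, hm2⟩
    refine ⟨?_, ?_⟩
    · intro x y
      calc tnorm (Ω x y) ((lam ⊓ mu) x)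
          = tnorm (Ω x y) (lam x) ⊓ tnorm (Ω x y) (mu x) := (h.mono _).map_min
        _ ≤ lam y ⊓ mu y := inf_le_inf (hl1 x y) (hm1 x y)
    · intro φ hflat s hws
      calc (lam ⊓ mu) s = lam s ⊓ mu s := rfl
        _ ≤ (⨆ x, tnorm (φ x) (lam x)) ⊓ (⨆ x, tnorm (φ x) (mu x)) :=
            inf_le_inf (hl2 φ hflat s hws) (hm2 φ hflat s hws)
        _ = ⨆ x, tnorm (φ x) ((lam ⊓ mu) x) := (hflat.2.2 lam mu hl1 hm1).symm
  · intro S hS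
    refine ⟨?_, ?_⟩
    · intro x y
      calc tnorm (Ω x y) (sSup S x) = ⨆ f : S, tnorm (Ω x y) ((f : I → I) x) := by
            rw [sSup_apply, h.map_iSup]
        _ ≤ sSup S y := by
            apply iSup_le; intro f
            rw [sSup_apply]
            exact le_trans ((hS f.2).1 x y) (le_iSup (fun g : S => (g : I → I) y) f)
    · intro φ hflat s hws
      rw [sSup_apply]
      apply iSup_le; intro f
      calc (f : I → I) s ≤ ⨆ x, tnorm (φ x) ((f : I → I) x) := (hS f.2).2 φ hflat s hws
        _ ≤ ⨆ x, tnorm (φ x) (sSup S x) := by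
            apply iSup_mono; intro x
            apply h.mono
            rw [sSup_apply]
            exact le_iSup (fun g : S => (g : I → I) x) f
  · rintro lam ⟨hl1, hl2⟩ r
    refine ⟨?_, ?_⟩
    · intro x y
      calc tnorm (Ω x y) (tnorm (lam x) r) = tnorm (tnorm (Ω x y) (lam x)) r :=
            (h.assoc _ _ _).symm
        _ ≤ tnorm (lam y) r := h.monoL r (hl1 x y)
    · intro φ hflat s hws
      calc tnorm (lam s) r ≤ tnorm (⨆ x, tnorm (φ x) (lam x)) r :=
            h.monoL r (hl2 φ hflat s hws)
        _ = ⨆ x, tnorm (tnorm (φ x) (lam x)) r := h.map_iSupL r _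
        _ = ⨆ x, tnorm (φ x) (tnorm (lam x) r) := by
            apply iSup_congr; intro x; rw [h.assoc]

lemma scott_id_mem : (fun x : I => x) ∈ scottTopology tnorm imp Ω := by
  have hΩeq : ∀ x y, Ω x y = imp x y := h.omega_eq himp hΩ
  refine ⟨?_, ?_⟩
  · intro x y
    rw [hΩeq, h.comm]
    exact h.tnorm_imp_le himp x y
  · intro φ hflat s hws
    exact h.weightSup_le himp hΩ hws

lemma sierpinski_subset_scott : sierpinski tnorm ⊆ scottTopology tnorm imp Ω :=
  sierpinski_subset (h.scott_qtop himp hΩ) (h.scott_id_mem himp hΩ)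

end TN
section Lattice

lemma mono_iSup_inf {ψ₁ ψ₂ : I → I} (h1 : Monotone ψ₁) (h2 : Monotone ψ₂) :
    (⨆ x, ψ₁ x ⊓ ψ₂ x) = (⨆ x, ψ₁ x) ⊓ (⨆ x, ψ₂ x) := by
  apply le_antisymm
  · exact iSup_le fun x => inf_le_inf (le_iSup _ x) (le_iSup _ x)
  · rw [iSup_inf_eq]
    apply iSup_le; intro x
    rw [inf_iSup_eq]
    apply iSup_le; intro y
    calc ψ₁ x ⊓ ψ₂ y ≤ ψ₁ (x ⊔ y) ⊓ ψ₂ (x ⊔ y) := inf_le_inf (h1 le_sup_left) (h2 le_sup_right)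
      _ ≤ ⨆ z, ψ₁ z ⊓ ψ₂ z := le_iSup (fun z => ψ₁ z ⊓ ψ₂ z) (x ⊔ y)

lemma lat_key {p₁ p₂ s₁ s₂ z : I} (hp1 : p₁ ≤ s₁) (hp2 : p₂ ≤ s₂) :
    (p₁ ⊓ p₂) ⊔ (z ⊓ (s₁ ⊓ s₂)) = (p₁ ⊔ (z ⊓ s₁)) ⊓ (p₂ ⊔ (z ⊓ s₂)) := by
  apply le_antisymm
  · apply sup_le
    · exact le_inf (le_trans inf_le_left le_sup_left) (le_trans inf_le_right le_sup_left)
    · apply le_inf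
      · exact le_trans (inf_le_inf_left z inf_le_left) le_sup_right
      · exact le_trans (inf_le_inf_left z inf_le_right) le_sup_right
  · rcases le_total p₁ (z ⊓ s₁) with h1 | h1
    · rcases le_total p₂ (z ⊓ s₂) with h2 | h2
      · rw [sup_eq_right.2 h1, sup_eq_right.2 h2]
        refine le_trans ?_ le_sup_right
        exact le_inf (le_trans inf_le_left inf_le_left)
          (le_inf (le_trans inf_le_left inf_le_right) (le_trans inf_le_right inf_le_right))
      · rw [sup_eq_right.2 h1, sup_eq_left.2 h2]
        refine le_trans ?_ le_sup_right
        exact le_inf (le_trans inf_le_left inf_le_left)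
          (le_inf (le_trans inf_le_left inf_le_right) (le_trans inf_le_right hp2))
    · rcases le_total p₂ (z ⊓ s₂) with h2 | h2
      · rw [sup_eq_left.2 h1, sup_eq_right.2 h2]
        refine le_trans ?_ le_sup_right
        exact le_inf (le_trans inf_le_right inf_le_left)
          (le_inf (le_trans inf_le_left hp1) (le_trans inf_le_right inf_le_right))
      · rw [sup_eq_left.2 h1, sup_eq_left.2 h2]
        exact le_sup_left

end Lattice

namespace TN
variable {tnorm : I → I → I} (h : TN tnorm)
variable (hgod : ∀ a b : I, tnorm a b = a ⊓ b)
variable {imp : I → I → I} (himp : ∀ x z, imp x z = sSup {q | tnorm x q ≤ z})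
variable {Ω : I → I → I} (hΩ : ∀ x y, Ω x y = ⨅ lam ∈ sierpinski tnorm, imp (lam x) (lam y))
include h hgod himp

lemma godel_imp_lt {x z : I} (hzx : z < x) : imp x z = z := by
  rw [himp]
  have hset : {q : I | tnorm x q ≤ z} = Set.Iic z := by
    ext q
    simp only [Set.mem_setOf_eq, Set.mem_Iic, hgod]
    constructor
    · intro hq
      by_contra hqz
      exact absurd hq (not_le.2 (lt_inf_iff.2 ⟨hzx, lt_of_not_ge hqz⟩))
    · intro hq; exact le_trans inf_le_right hq
  rw [hset]
  exact le_antisymm (sSup_le fun _ hq => hq) (le_sSup (Set.mem_Iic.2 le_rfl))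

include hΩ

lemma coweight_mono {ψ : I → I} (hcw : ∀ x y, tnorm (Ω x y) (ψ x) ≤ ψ y) : Monotone ψ := by
  have hΩeq := h.omega_eq himp hΩ
  intro x y hxy
  have hx := hcw x y
  rwa [hΩeq, h.imp_eq_one himp hxy, h.unit] at hx

omit hΩ in
lemma godel_F (z : I) (ψ : I → I) :
    (⨆ x, tnorm (if x = 0 then (1:I) else z) (ψ x)) = ψ 0 ⊔ (z ⊓ ⨆ x, ψ x) := by
  apply le_antisymm
  · apply iSup_le; intro x
    by_cases hx : x = 0
    · subst hx
      simp only [if_pos rfl, hgod]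
      exact le_trans inf_le_right le_sup_left
    · simp only [if_neg hx, hgod]
      exact le_trans (inf_le_inf_left z (le_iSup ψ x)) le_sup_right
  · apply sup_le
    · have h0 : (fun x : I => tnorm (if x = 0 then (1:I) else z) (ψ x)) 0 = ψ 0 := by
        simp [h.unit]
      exact le_trans (le_of_eq h0.symm)
        (le_iSup (fun x : I => tnorm (if x = 0 then (1:I) else z) (ψ x)) 0)
    · rw [inf_iSup_eq]
      apply iSup_le; intro x
      by_cases hx : x = 0
      · subst hx
        refine le_trans inf_le_right ?_
        have h0 : (fun x : I => tnorm (if x = 0 then (1:I) else z) (ψ x)) 0 = ψ 0 := by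
          simp [h.unit]
        exact le_trans (le_of_eq h0.symm)
          (le_iSup (fun x : I => tnorm (if x = 0 then (1:I) else z) (ψ x)) 0)
      · have hx' : (fun x : I => tnorm (if x = 0 then (1:I) else z) (ψ x)) x = z ⊓ ψ x := by
          simp [if_neg hx, hgod]
        exact le_trans (le_of_eq hx'.symm)
          (le_iSup (fun x : I => tnorm (if x = 0 then (1:I) else z) (ψ x)) x)

lemma godel_ws (z : I) : IsWeightSup imp Ω (fun x : I => if x = 0 then (1:I) else z) z := by
  have hΩeq := h.omega_eq himp hΩ
  intro y
  simp only [hΩeq]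
  apply le_antisymm
  · apply le_iInf; intro x
    by_cases hx : x = 0
    · subst hx
      rw [if_pos rfl, h.imp_eq_one himp (show (0:I) ≤ y from bot_le),
        h.imp_eq_one himp (le_refl (1:I))]
      exact le_one'
    · simp only [if_neg hx]
      exact h.imp_mono himp (h.self_le_imp himp x y)
  · rcases le_or_gt z y with hzy | hyz
    · rw [h.imp_eq_one himp hzy]; exact le_one'
    · have hz0 : z ≠ 0 := fun hz => absurd (hz ▸ hyz) (not_lt.2 bot_le)
      have hterm : imp (if (z:I) = 0 then (1:I) else z) (imp z y) = y := by
        rw [if_neg hz0, h.godel_imp_lt hgod himp hyz, h.godel_imp_lt hgod himp hyz]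
      rw [h.godel_imp_lt hgod himp hyz]
      exact le_trans (iInf_le (fun x : I => imp (if x = 0 then (1:I) else z) (imp x y)) z)
        (le_of_eq hterm)

lemma godel_flat (z : I) : IsFlatIdeal tnorm Ω (fun x : I => if x = 0 then (1:I) else z) := by
  have hΩeq := h.omega_eq himp hΩ
  refine ⟨?_, ?_, ?_⟩
  · intro x y
    by_cases hx : x = 0
    · subst hx; simp only [if_pos rfl]; exact le_one'
    · simp only [if_neg hx]
      by_cases hy : y = 0
      · subst hy
        have h0x : (0:I) < x := lt_of_le_of_ne bot_le (Ne.symm hx)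
        rw [if_pos rfl, hΩeq, h.godel_imp_lt hgod himp h0x, h.zero_right]
        exact bot_le
      · rw [if_neg hy]; exact h.le_left _ _
  · refine le_trans (le_of_eq (by simp)) (le_iSup (fun x : I => if x = 0 then (1:I) else z) 0)
  · intro ψ₁ ψ₂ hc1 hc2
    have hm1 := h.coweight_mono hgod himp hΩ hc1
    have hm2 := h.coweight_mono hgod himp hΩ hc2
    have e0 := h.godel_F hgod himp z (fun x => ψ₁ x ⊓ ψ₂ x)
    have e1 := h.godel_F hgod himp z ψ₁
    have e2 := h.godel_F hgod himp z ψ₂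
    rw [e0, e1, e2, mono_iSup_inf hm1 hm2]
    exact lat_key (le_iSup ψ₁ 0) (le_iSup ψ₂ 0)

lemma backward : scottTopology tnorm imp Ω ⊆ sierpinski tnorm := by
  rintro ψ ⟨hcw, hsc⟩
  have hΩeq := h.omega_eq himp hΩ
  have hmono := h.coweight_mono hgod himp hΩ hcw
  have hform : ψ = fun z => (z ⊓ ⨆ x, ψ x) ⊔ ψ 0 := by
    funext z
    apply le_antisymm
    · have h1 := hsc _ (h.godel_flat hgod himp hΩ z) z (h.godel_ws hgod himp hΩ z)
      rw [h.godel_F hgod himp z ψ] at h1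
      exact le_trans h1 (le_of_eq (sup_comm _ _))
    · apply sup_le
      · rw [inf_iSup_eq]
        apply iSup_le; intro x
        rcases le_total x z with hxz | hzx
        · exact le_trans inf_le_right (hmono hxz)
        · rcases hzx.lt_or_eq with hlt | heq2
          · have hx := hcw x z
            rwa [hΩeq, h.godel_imp_lt hgod himp hlt, hgod] at hx
          · rw [← heq2]; exact inf_le_right
      · exact hmono bot_le
  rw [hform]
  apply Set.mem_sInter.2
  rintro τ ⟨⟨h1, h2, h3, h4⟩, hid⟩
  have hf1 : (fun z : I => tnorm z (⨆ x, ψ x)) ∈ τ := h4 (fun x => x) hid _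
  have hf2 : (fun _ : I => tnorm 1 (ψ 0)) ∈ τ := h4 (fun _ : I => 1) h1 _
  have hkey : (fun z : I => (z ⊓ ⨆ x, ψ x) ⊔ ψ 0) =
      sSup {(fun z : I => tnorm z (⨆ x, ψ x)), (fun _ : I => tnorm 1 (ψ 0))} := by
    rw [sSup_pair]
    funext z
    rw [Pi.sup_apply]
    rw [show tnorm (1:I) (ψ 0) = ψ 0 from h.unit _, hgod]
  rw [hkey]
  apply h3
  rintro f (rfl | rfl)
  · exact hf1
  · exact hf2

end TN

/-- The Sierpiński `Q`-topological space `𝕊` over `([0,1], &)` coincides with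
the Scott `Q`-topology of its specialization `Q`-order iff `&` is the Gödel
t-norm (the minimum). -/
theorem sierpinski_eq_scott_iff_godel
    (tnorm : I → I → I)
    (comm : ∀ x y, tnorm x y = tnorm y x)
    (assoc : ∀ x y z, tnorm (tnorm x y) z = tnorm x (tnorm y z))
    (unit : ∀ x, tnorm 1 x = x)
    (mono : ∀ x, Monotone (tnorm x))
    (cont : Continuous (fun q : I × I => tnorm q.1 q.2))
    (imp : I → I → I)
    (himp : ∀ x z, imp x z = sSup {q | tnorm x q ≤ z})
    -- the specialization Q-order of 𝕊
    (Ω : I → I → I)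
    (hΩ : ∀ x y, Ω x y = ⨅ lam ∈ sierpinski tnorm, imp (lam x) (lam y)) :
    sierpinski tnorm = scottTopology tnorm imp Ω ↔
      ∀ a b : I, tnorm a b = a ⊓ b := by
  have h : TN tnorm := ⟨comm, assoc, unit, mono, cont⟩
  constructor
  · intro heq
    exact h.forward himp hΩ heq
  · intro hgod
    apply Set.Subset.antisymm
    · exact h.sierpinski_subset_scott himp hΩ
    · exact h.backward hgod himp hΩ
end
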